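/- arXiv:1209.1601 — 5 statements merged into one kernel-verified Lean document; each statement's English description precedes it below -/
import Mathlib

section
/- Let f and g be commuting orientation-preserving C^∞ diffeomorphisms of [0,1], both different from the identity, having no common fixed point in (0,1) at which both are infinitely tangent to the identity. If g^q = f^p for some p ∈ ℤ \ {0} and q ∈ ℕ \ {0} with p and q coprime, then there exists an orientation-preserving C^∞ diffeomorphism h of [0,1] such that f = h^q and g = h^p. -/
set_option autoImplicit false

open Set

/-- `f : ℝ → ℝ` represents (a smooth extension of) an orientation-preserving `C^∞`
diffeomorphism of the interval `[0,1]`. -/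
def SmoothDiffeoI (f : ℝ → ℝ) : Prop :=
  ContDiff ℝ (⊤ : ℕ∞) f ∧ f 0 = 0 ∧ f 1 = 1 ∧ (∀ x ∈ Icc (0 : ℝ) 1, 0 < deriv f x) ∧
    MapsTo f (Icc (0 : ℝ) 1) (Icc (0 : ℝ) 1)

/-- `f` is infinitely tangent to the identity at `p`. -/
def ITIat (f : ℝ → ℝ) (p : ℝ) : Prop :=
  f p = p ∧ ∀ n : ℕ, 1 ≤ n → iteratedDeriv n (fun x => f x - x) p = 0

/-- `finv` is a two-sided inverse of `f` on the set `s`. -/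
def IsInverseOn (finv f : ℝ → ℝ) (s : Set ℝ) : Prop :=
  (∀ x ∈ s, finv (f x) = x) ∧ ∀ x ∈ s, f (finv x) = x

/-- The `n`-th power (`n ∈ ℤ`) of the bijection `h` with inverse `hinv`. -/
def zpowIter (h hinv : ℝ → ℝ) (n : ℤ) : ℝ → ℝ :=
  if 0 ≤ n then h^[n.toNat] else hinv^[(-n).toNat]

/-! Choose a Bézout relation `a p + b q = 1` with `a ≥ 0`. In the group of permutations of
`[0,1]`, the element `h = g^a f^b` satisfies `h^q = f^(a p + b q) = f` and
`h^p = g^(a p + b q) = g`, using only that `f` and `g` commute and `g^q = f^p`. Because `a ≥ 0`,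
`h` is a composite of iterates of `g`, `f` and `f⁻¹`, hence a smooth diffeomorphism. -/

theorem IsCoprime.exists_nonneg_bezout {p q : ℤ} (h : IsCoprime p q) (hq : q ≠ 0) :
    ∃ a b : ℤ, 0 ≤ a ∧ a * p + b * q = 1 := by
  obtain ⟨u, v, huv⟩ := h
  refine ⟨u % q, v + p * (u / q), Int.emod_nonneg u hq, ?_⟩
  linear_combination huv + p * Int.emod_add_mul_ediv u q

theorem Commute.zpow_root_of_zpow_eq_zpow {G : Type*} [Group G] {f g : G} (hc : Commute g f)
    {p q a b : ℤ} (hrel : g ^ q = f ^ p) (hab : a * p + b * q = 1) :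
    (g ^ a * f ^ b) ^ q = f ∧ (g ^ a * f ^ b) ^ p = g := by
  have hcomm : Commute (g ^ a) (f ^ b) := hc.zpow_zpow a b
  constructor
  · calc (g ^ a * f ^ b) ^ q = (g ^ q) ^ a * f ^ (b * q) := by
          rw [hcomm.mul_zpow, ← zpow_mul, ← zpow_mul, mul_comm a q, zpow_mul]
      _ = f ^ (a * p + b * q) := by rw [hrel, ← zpow_mul, mul_comm p a, zpow_add]
      _ = f := by rw [hab, zpow_one]
  · calc (g ^ a * f ^ b) ^ p = g ^ (a * p) * (f ^ p) ^ b := by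
          rw [hcomm.mul_zpow, ← zpow_mul, ← zpow_mul, ← zpow_mul, mul_comm b p]
      _ = g ^ (a * p + b * q) := by rw [← hrel, ← zpow_mul, mul_comm q b, zpow_add]
      _ = g := by rw [hab, zpow_one]

namespace SmoothDiffeoI

theorem id : SmoothDiffeoI id :=
  ⟨contDiff_id, rfl, rfl, fun x _ => by simp, mapsTo_id _⟩

theorem comp {φ ψ : ℝ → ℝ} (hφ : SmoothDiffeoI φ) (hψ : SmoothDiffeoI ψ) :
    SmoothDiffeoI (φ ∘ ψ) := by
  obtain ⟨hφ_smooth, hφ0, hφ1, hφ_deriv, hφ_maps⟩ := hφ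
  obtain ⟨hψ_smooth, hψ0, hψ1, hψ_deriv, hψ_maps⟩ := hψ
  refine ⟨hφ_smooth.comp hψ_smooth, by simp [hψ0, hφ0], by simp [hψ1, hφ1], fun x hx => ?_,
    hφ_maps.comp hψ_maps⟩
  rw [deriv_comp x (hφ_smooth.differentiable (by simp)).differentiableAt
    (hψ_smooth.differentiable (by simp)).differentiableAt]
  exact mul_pos (hφ_deriv _ (hψ_maps hx)) (hψ_deriv x hx)

theorem iterate {φ : ℝ → ℝ} (hφ : SmoothDiffeoI φ) (n : ℕ) : SmoothDiffeoI φ^[n] := by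
  induction n with
  | zero => exact id
  | succ n ih => rw [Function.iterate_succ]; exact ih.comp hφ

theorem zpowIter {φ φinv : ℝ → ℝ} (hφ : SmoothDiffeoI φ) (hφinv : SmoothDiffeoI φinv) (n : ℤ) :
    SmoothDiffeoI (zpowIter φ φinv n) := by
  unfold _root_.zpowIter
  split
  · exact hφ.iterate _
  · exact hφinv.iterate _

theorem bijOn {φ : ℝ → ℝ} (hφ : SmoothDiffeoI φ) : BijOn φ (Icc 0 1) (Icc 0 1) := by
  obtain ⟨hφ_smooth, hφ0, hφ1, hφ_deriv, hφ_maps⟩ := hφ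
  have hmono : StrictMonoOn φ (Icc 0 1) :=
    strictMonoOn_of_deriv_pos (convex_Icc 0 1) hφ_smooth.continuous.continuousOn
      fun x hx => hφ_deriv x (interior_subset hx)
  have hsurj := intermediate_value_Icc zero_le_one hφ_smooth.continuous.continuousOn
  rw [hφ0, hφ1] at hsurj
  exact ⟨hφ_maps, hmono.injOn, hsurj⟩

noncomputable def toPerm {φ : ℝ → ℝ} (hφ : SmoothDiffeoI φ) : Equiv.Perm (Icc (0 : ℝ) 1) :=
  hφ.bijOn.equiv φ

theorem semiconj_toPerm {φ : ℝ → ℝ} (hφ : SmoothDiffeoI φ) :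
    Function.Semiconj Subtype.val hφ.toPerm φ :=
  fun _ => rfl

end SmoothDiffeoI

namespace Equiv.Perm

variable {s : Set ℝ} {σ : Equiv.Perm s} {φ ψ : ℝ → ℝ}

theorem semiconj_inv_of_isInverseOn (hφ : Function.Semiconj Subtype.val σ φ)
    (hψ : IsInverseOn ψ φ s) : Function.Semiconj Subtype.val ⇑(σ⁻¹) ψ := fun x => by
  rw [← hψ.1 _ (σ⁻¹ x).2, ← hφ, ← mul_apply, mul_inv_cancel, one_apply]

theorem isInverseOn_of_semiconj (hφ : Function.Semiconj Subtype.val σ φ)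
    (hψ : Function.Semiconj Subtype.val ⇑(σ⁻¹) ψ) : IsInverseOn ψ φ s := by
  refine ⟨fun x hx => ?_, fun x hx => ?_⟩
  · rw [← hφ ⟨x, hx⟩, ← hψ, ← mul_apply, inv_mul_cancel, one_apply]
  · rw [← hψ ⟨x, hx⟩, ← hφ, ← mul_apply, mul_inv_cancel, one_apply]

theorem coe_zpow_apply (hφ : Function.Semiconj Subtype.val σ φ)
    (hψ : Function.Semiconj Subtype.val ⇑(σ⁻¹) ψ) (n : ℤ) (x : s) :
    ((σ ^ n) x : ℝ) = zpowIter φ ψ n x := by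
  unfold zpowIter
  split_ifs with hn
  · rw [← Int.toNat_of_nonneg hn, zpow_natCast, coe_pow, Int.toNat_natCast]
    exact hφ.iterate_right _ x
  · rw [← neg_neg n, ← Int.toNat_of_nonneg (by omega : 0 ≤ -n), zpow_neg, zpow_natCast,
      ← inv_pow, coe_pow, neg_neg, Int.toNat_natCast]
    exact hψ.iterate_right _ x

end Equiv.Perm

theorem common_root_of_rational_relation_general (f g finv : ℝ → ℝ)
    (hf : SmoothDiffeoI f) (hg : SmoothDiffeoI g)
    (hfinv : SmoothDiffeoI finv) (hinv : IsInverseOn finv f (Icc (0 : ℝ) 1))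
    (hcomm : ∀ x ∈ Icc (0 : ℝ) 1, f (g x) = g (f x))
    (p : ℤ) (q : ℕ) (hq : q ≠ 0) (hpq : IsCoprime p (q : ℤ))
    (hrel : ∀ x ∈ Icc (0 : ℝ) 1, g^[q] x = zpowIter f finv p x) :
    ∃ h hinv' : ℝ → ℝ, SmoothDiffeoI h ∧ IsInverseOn hinv' h (Icc (0 : ℝ) 1) ∧
      (∀ x ∈ Icc (0 : ℝ) 1, f x = h^[q] x) ∧
      ∀ x ∈ Icc (0 : ℝ) 1, g x = zpowIter h hinv' p x := by
  obtain ⟨a, b, ha, hab⟩ := hpq.exists_nonneg_bezout (by exact_mod_cast hq)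
  set F := hf.toPerm
  set G := hg.toPerm
  have hFinv := Equiv.Perm.semiconj_inv_of_isInverseOn hf.semiconj_toPerm hinv
  have hGF_comm : Commute G F := Equiv.ext fun x => Subtype.ext (hcomm x x.2).symm
  have hGF : G ^ (q : ℤ) = F ^ p := Equiv.ext fun x => Subtype.ext <| by
    rw [zpow_natCast, Equiv.Perm.coe_pow, Equiv.Perm.coe_zpow_apply hf.semiconj_toPerm hFinv,
      ← hrel x x.2]
    exact hg.semiconj_toPerm.iterate_right q x
  obtain ⟨hHq, hHp⟩ := hGF_comm.zpow_root_of_zpow_eq_zpow hGF hab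
  set H := G ^ a * F ^ b
  let h := g^[a.toNat] ∘ zpowIter f finv b
  let hinv' : ℝ → ℝ := fun x => if hx : x ∈ Icc (0 : ℝ) 1 then (H⁻¹ ⟨x, hx⟩ : ℝ) else x
  have hH : Function.Semiconj Subtype.val H h := fun x => by
    rw [Equiv.Perm.mul_apply, ← Int.toNat_of_nonneg ha, zpow_natCast, Equiv.Perm.coe_pow,
      hg.semiconj_toPerm.iterate_right, Equiv.Perm.coe_zpow_apply hf.semiconj_toPerm hFinv]
    rfl
  have hHinv : Function.Semiconj Subtype.val ⇑(H⁻¹) hinv' :=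
    fun x => (dif_pos x.2 : hinv' x = _).symm
  refine ⟨h, hinv', (hg.iterate _).comp (hf.zpowIter hfinv b),
    Equiv.Perm.isInverseOn_of_semiconj hH hHinv, fun x hx => ?_, fun x hx => ?_⟩
  · rw [← hH.iterate_right q ⟨x, hx⟩, ← Equiv.Perm.coe_pow, ← zpow_natCast, hHq]
    rfl
  · rw [← Equiv.Perm.coe_zpow_apply hH hHinv p ⟨x, hx⟩, hHp]
    rfl

/-- Let `f, g` be commuting orientation-preserving `C^∞` diffeomorphisms of `[0,1]`, both
different from the identity, with no common fixed point in `(0,1)` at which both are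
infinitely tangent to the identity. If `g^q = f^p` with `p ∈ ℤ \ {0}`, `q ∈ ℕ \ {0}`
coprime, then `f = h^q` and `g = h^p` for some orientation-preserving `C^∞`
diffeomorphism `h` of `[0,1]`. -/
theorem common_root_of_rational_relation (f g finv : ℝ → ℝ)
    (hf : SmoothDiffeoI f) (hg : SmoothDiffeoI g)
    (hfinv : SmoothDiffeoI finv) (hinv : IsInverseOn finv f (Icc (0 : ℝ) 1))
    (hcomm : ∀ x ∈ Icc (0 : ℝ) 1, f (g x) = g (f x))
    (hfid : ¬ ∀ x ∈ Icc (0 : ℝ) 1, f x = x)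
    (hgid : ¬ ∀ x ∈ Icc (0 : ℝ) 1, g x = x)
    (hnd : ∀ x ∈ Ioo (0 : ℝ) 1, ¬ (ITIat f x ∧ ITIat g x))
    (p : ℤ) (hp : p ≠ 0) (q : ℕ) (hq : q ≠ 0) (hpq : IsCoprime p (q : ℤ))
    (hrel : ∀ x ∈ Icc (0 : ℝ) 1, g^[q] x = zpowIter f finv p x) :
    ∃ h hinv' : ℝ → ℝ, SmoothDiffeoI h ∧ IsInverseOn hinv' h (Icc (0 : ℝ) 1) ∧
      (∀ x ∈ Icc (0 : ℝ) 1, f x = h^[q] x) ∧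
      ∀ x ∈ Icc (0 : ℝ) 1, g x = zpowIter h hinv' p x :=
  common_root_of_rational_relation_general f g finv hf hg hfinv hinv hcomm p q hq hpq hrel
end

section
/- Let f be an orientation-preserving C¹ diffeomorphism of [0,1] with Df(0) = 1. Then the quantity sup over y ∈ [x, f^{±2}(x)] of |(f(y) − y)/(f(x) − x) − 1| tends to 0 as x tends to 0 with x ∉ Fix(f). -/
set_option autoImplicit false

open Set Metric

/-- `f : ℝ → ℝ` represents (a `C^r` extension of) an orientation-preserving `C^r`
diffeomorphism of the interval `[a,b]`. -/
def CrDiffeoOn (r : ℕ∞) (f : ℝ → ℝ) (a b : ℝ) : Prop :=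
  ContDiff ℝ r f ∧ f a = a ∧ f b = b ∧ (∀ x ∈ Icc a b, 0 < deriv f x) ∧
    MapsTo f (Icc a b) (Icc a b)

/-!
Write `g = f - id` for the displacement. Since `Df` is continuous with `Df(0) = 1`, for every
`K > 0` the displacement is `K`-Lipschitz on some `[0, η)`. For `K ≤ 1/2`, one step `a ↦ b` of an
orbit (forward or backward) moves by at most `|g a| + |g b|` and changes `|g|` by at most a factor
`3`, so every point of `[x, f^{±2}(x)]` lies within `16 |g x|` of `x`. Lipschitz continuity then
gives `|g y - g x| ≤ 16 K |g x|`. Backward steps stay in `[0, η)` since `f (2a) ≥ a` and `f` is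
increasing, so `f⁻¹(a) ≤ 2a`.
-/

open scoped NNReal

theorem exists_lipschitzOnWith_displacement_ball {f : ℝ → ℝ} {p : ℝ} (hf : Differentiable ℝ f)
    (hcont : ContinuousAt (deriv f) p) (hp : deriv f p = 1) {K : ℝ≥0} (hK : 0 < K) :
    ∃ η > 0, LipschitzOnWith K (fun t => f t - t) (ball p η) := by
  obtain ⟨η, hη, hclose⟩ := Metric.continuousAt_iff.mp hcont K hK
  refine ⟨η, hη, (convex_ball p η).lipschitzOnWith_of_nnnorm_deriv_le
    (fun t _ => (hf t).sub differentiableAt_id) fun t ht => ?_⟩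
  have hd : HasDerivAt (fun t => f t - t) (deriv f t - 1) t :=
    (hf t).hasDerivAt.sub (hasDerivAt_id' t)
  rw [← NNReal.coe_le_coe, coe_nnnorm, hd.deriv, Real.norm_eq_abs, ← hp, ← Real.dist_eq]
  exact (hclose ht).le

section Displacement

variable {f : ℝ → ℝ} {s : Set ℝ} {K : ℝ≥0}

theorem abs_displacement_sub_le (hL : LipschitzOnWith K (fun t => f t - t) s) {a b : ℝ}
    (ha : a ∈ s) (hb : b ∈ s) : |(f b - b) - (f a - a)| ≤ K * |b - a| := by
  simpa only [Real.dist_eq] using hL.dist_le_mul b hb a ha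

theorem abs_sub_le_of_step {a b : ℝ} (hab : f a = b ∨ f b = a) :
    |b - a| ≤ |f a - a| + |f b - b| := by
  rcases hab with rfl | rfl
  · linarith [abs_nonneg (f (f a) - f a)]
  · rw [abs_sub_comm]
    linarith [abs_nonneg (f (f b) - f b)]

theorem abs_displacement_le_three_mul_of_step (hK : (K : ℝ) ≤ 1 / 2)
    (hL : LipschitzOnWith K (fun t => f t - t) s) {a b : ℝ} (ha : a ∈ s) (hb : b ∈ s)
    (hab : f a = b ∨ f b = a) : |f b - b| ≤ 3 * |f a - a| := by
  have hlip := abs_displacement_sub_le hL ha hb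
  have hstep := abs_sub_le_of_step hab
  have hrev := abs_sub_abs_le_abs_sub (f b - b) (f a - a)
  nlinarith [abs_nonneg (f a - a), abs_nonneg (f b - b), abs_nonneg (b - a), K.coe_nonneg]

theorem abs_sub_le_of_two_steps (hK : (K : ℝ) ≤ 1 / 2)
    (hL : LipschitzOnWith K (fun t => f t - t) s) {a b c : ℝ} (ha : a ∈ s) (hb : b ∈ s)
    (hc : c ∈ s) (hab : f a = b ∨ f b = a) (hbc : f b = c ∨ f c = b) :
    |c - a| ≤ 16 * |f a - a| := by
  have hgb := abs_displacement_le_three_mul_of_step hK hL ha hb hab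
  have hgc := abs_displacement_le_three_mul_of_step hK hL hb hc hbc
  calc |c - a| ≤ |c - b| + |b - a| := abs_sub_le c b a
    _ ≤ (|f b - b| + |f c - c|) + (|f a - a| + |f b - b|) :=
      add_le_add (abs_sub_le_of_step hbc) (abs_sub_le_of_step hab)
    _ ≤ 16 * |f a - a| := by linarith

theorem abs_displacement_div_sub_one_lt (hL : LipschitzOnWith K (fun t => f t - t) s)
    {x y C ε : ℝ} (hx : x ∈ s) (hy : y ∈ s) (hfx : f x ≠ x) (hyx : |y - x| ≤ C * |f x - x|)
    (hKC : K * C < ε) : |(f y - y) / (f x - x) - 1| < ε := by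
  have hgx : 0 < |f x - x| := abs_pos.mpr (sub_ne_zero.mpr hfx)
  rw [div_sub_one (sub_ne_zero.mpr hfx), abs_div, div_lt_iff₀ hgx]
  calc |(f y - y) - (f x - x)| ≤ K * |y - x| := abs_displacement_sub_le hL hx hy
    _ ≤ K * (C * |f x - x|) := mul_le_mul_of_nonneg_left hyx K.coe_nonneg
    _ < ε * |f x - x| := by rw [← mul_assoc]; exact mul_lt_mul_of_pos_right hKC hgx

end Displacement

section NearZero

variable {f : ℝ → ℝ} {K : ℝ≥0} {η : ℝ}

theorem abs_displacement_le_mul_self (hf0 : f 0 = 0)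
    (hL : LipschitzOnWith K (fun t => f t - t) (Ico 0 η)) {t : ℝ} (ht : t ∈ Ico 0 η) :
    |f t - t| ≤ K * t := by
  simpa [hf0, abs_of_nonneg ht.1] using
    abs_displacement_sub_le hL ⟨le_rfl, ht.1.trans_lt ht.2⟩ ht

theorem le_two_mul_of_step (hmono : StrictMonoOn f (Icc 0 1)) (hf0 : f 0 = 0)
    (hK : (K : ℝ) ≤ 1 / 2) (hL : LipschitzOnWith K (fun t => f t - t) (Ico 0 η)) {a b : ℝ}
    (ha : 2 * a ∈ Ico 0 η) (ha1 : 2 * a ≤ 1) (hb : b ∈ Icc 0 1) (hab : f a = b ∨ f b = a) :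
    b ≤ 2 * a := by
  have ha0 : 0 ≤ a := by linarith [ha.1]
  rcases hab with rfl | rfl
  · have h := abs_le.mp (abs_displacement_le_mul_self hf0 hL ⟨ha0, by linarith [ha.2]⟩)
    nlinarith
  · by_contra! hlt
    have h := abs_le.mp (abs_displacement_le_mul_self hf0 hL ha)
    have hmono' := hmono ⟨ha.1, ha1⟩ hb hlt
    nlinarith

theorem le_min_of_two_steps (hmono : StrictMonoOn f (Icc 0 1)) (hf0 : f 0 = 0)
    (hK : (K : ℝ) ≤ 1 / 2) (hL : LipschitzOnWith K (fun t => f t - t) (Ico 0 η)) {x b c : ℝ}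
    (hx0 : 0 ≤ x) (hx1 : 4 * x ≤ 1) (hxη : 4 * x < η) (hb : b ∈ Icc 0 1) (hc : c ∈ Icc 0 1)
    (hxb : f x = b ∨ f b = x) (hbc : f b = c ∨ f c = b) :
    c ≤ min (4 * x) (x + 16 * |f x - x|) := by
  have hbx := le_two_mul_of_step hmono hf0 hK hL ⟨by linarith, by linarith⟩ (by linarith) hb hxb
  have hcb := le_two_mul_of_step hmono hf0 hK hL ⟨by linarith [hb.1], by linarith⟩
    (by linarith) hc hbc
  have hcx := abs_sub_le_of_two_steps hK hL ⟨hx0, by linarith⟩ ⟨hb.1, by linarith⟩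
    ⟨hc.1, by linarith⟩ hxb hbc
  exact le_min (by linarith) (by linarith [le_abs_self (c - x)])

end NearZero

/-- Let `f` be an orientation-preserving `C¹` diffeomorphism of `[0,1]` with `Df(0) = 1`.
Then `sup_{y ∈ [x, f^{±2}(x)]} |(f(y) − y)/(f(x) − x) − 1| → 0` as `x → 0`, `x ∉ Fix(f)`,
where `f^{±2}(x) = max (f²(x), f⁻²(x))`. -/
theorem displacement_ratio_tendsto_zero (f finv : ℝ → ℝ)
    (hf : CrDiffeoOn 1 f 0 1) (hfinv : IsInverseOn finv f (Icc (0 : ℝ) 1))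
    (hfinvmaps : MapsTo finv (Icc (0 : ℝ) 1) (Icc (0 : ℝ) 1))
    (hDf0 : deriv f 0 = 1) :
    ∀ ε > (0 : ℝ), ∃ δ > (0 : ℝ), ∀ x ∈ Ioo (0 : ℝ) 1, x < δ → f x ≠ x →
      ∀ y ∈ Icc x (max (f (f x)) (finv (finv x))),
        |(f y - y) / (f x - x) - 1| < ε := by
  obtain ⟨hC1, hf0, -, hpos, hmaps⟩ := hf
  obtain ⟨-, hinv⟩ := hfinv
  have hdiff : Differentiable ℝ f := hC1.differentiable one_ne_zero
  have hmono : StrictMonoOn f (Icc 0 1) :=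
    strictMonoOn_of_deriv_pos (convex_Icc 0 1) hdiff.continuous.continuousOn
      fun t ht => hpos t (interior_subset ht)
  intro ε hε
  obtain ⟨K, hK0, hKε, hK⟩ : ∃ K : ℝ≥0, 0 < K ∧ K * 16 < ε ∧ (K : ℝ) ≤ 1 / 2 :=
    ⟨(min (ε / 17) (1 / 2)).toNNReal, by positivity, by
      rw [Real.coe_toNNReal _ (by positivity)]; linarith [min_le_left (ε / 17) (1 / 2)], by
      rw [Real.coe_toNNReal _ (by positivity)]; exact min_le_right _ _⟩
  obtain ⟨η, hη, hball⟩ := exists_lipschitzOnWith_displacement_ball hdiff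
    (hC1.continuous_deriv le_rfl).continuousAt hDf0 hK0
  have hL : LipschitzOnWith K (fun t => f t - t) (Ico 0 η) := hball.mono <| by
    rw [Real.ball_eq_Ioo, zero_sub, zero_add]
    exact Ico_subset_Ioo_left (neg_lt_zero.mpr hη)
  refine ⟨min (η / 4) (1 / 4), by positivity, fun x hx hxδ hfx y hy => ?_⟩
  have hxη : 4 * x < η := by linarith [hxδ.trans_le (min_le_left _ _)]
  have hx1 : 4 * x ≤ 1 := by linarith [hxδ.trans_le (min_le_right _ _)]
  have hxI : x ∈ Icc (0 : ℝ) 1 := Ioo_subset_Icc_self hx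
  have hmax : max (f (f x)) (finv (finv x)) ≤ min (4 * x) (x + 16 * |f x - x|) := max_le
    (le_min_of_two_steps hmono hf0 hK hL hxI.1 hx1 hxη (hmaps hxI) (hmaps (hmaps hxI))
      (.inl rfl) (.inl rfl))
    (le_min_of_two_steps hmono hf0 hK hL hxI.1 hx1 hxη (hfinvmaps hxI)
      (hfinvmaps (hfinvmaps hxI)) (.inr (hinv x hxI)) (.inr (hinv _ (hfinvmaps hxI))))
  obtain ⟨hy4, hy16⟩ := le_min_iff.mp (hy.2.trans hmax)
  exact abs_displacement_div_sub_one_lt hL ⟨hxI.1, by linarith⟩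
    ⟨by linarith [hy.1], by linarith⟩ hfx
    (by rw [abs_of_nonneg (sub_nonneg.mpr hy.1)]; linarith) hKε
end

section
/- Let ∂ ⊂ {0,1} and let f ∈ Diff*_∂[0,1] be the time-1 map of the flow of a vector field ξ on [0,1] which is C¹ on [0,1]. Then (a) the function log|ξ(x)/(f(x) − x)| is bounded on [0,1] \ Fix(f); and (b) if Df(0) = 1 and D²f(0) = 0, then ξ(x) ∼ f(x) − x ∼ x − f^{−1}(x) as x → 0. -/
set_option autoImplicit false

open Set

/-- `Diff*_∂[0,1]`: the identity, together with the orientation-preserving `C^∞`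
diffeomorphisms of `[0,1]` which are infinitely tangent to the identity exactly at the
points of `D` and nowhere else in `[0,1]`. -/
def DiffStar (D : Set ℝ) (f : ℝ → ℝ) : Prop :=
  SmoothDiffeoI f ∧
    ((∀ x ∈ Icc (0 : ℝ) 1, f x = x) ∨ ∀ p ∈ Icc (0 : ℝ) 1, (ITIat f p ↔ p ∈ D))

/-- `φ` is the (complete) flow of the vector field `ξ` on the interval `[a,b]`. -/
def IsFlowOn (ξ : ℝ → ℝ) (φ : ℝ → ℝ → ℝ) (a b : ℝ) : Prop :=
  (∀ x ∈ Icc a b, φ 0 x = x) ∧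
    ∀ x ∈ Icc a b, ∀ t : ℝ, φ t x ∈ Icc a b ∧ HasDerivAt (fun s => φ s x) (ξ (φ t x)) t

/-!
Write `γ t = φ t x` for the orbit of `x` and `ξ'` for the derivative of `ξ` within `[0,1]`.
Since `ξ` is Lipschitz, uniqueness of solutions shows that `ξ` either vanishes at `x` (and the
orbit is constant) or vanishes nowhere on the orbit. In the latter case `log |ξ ∘ γ|` has
derivative `ξ' ∘ γ`, so `ξ (γ t) / ξ x ∈ [e^{-C}, e^C]` whenever `|ξ'| ≤ C` along the orbit, and
the same bound passes to `(f x - x) / ξ x = ∫₀¹ ξ (γ t) / ξ x dt`; this gives (a).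

For (b), `Df(0) = 1` makes `f - id = o(x)` at `0`, so `ξ = O(f - id)` forces `ξ'(0) = 0`. Orbits
of points near `0` lie between `x` and `f x`, hence near `0`, where `|ξ'|` is small, so
`(f x - x) / ξ x → 1` and `ξ (f x) / ξ x → 1`. For the inverse, put `y = f⁻¹ x`: then
`x - f⁻¹ x = f y - y`, and `y → 0` as `x → 0`.
-/

open Filter Topology Real

theorem abs_log_le_iff_mem_Icc_exp {r C : ℝ} (hr : 0 < r) :
    |log r| ≤ C ↔ r ∈ Icc (exp (-C)) (exp C) := by
  rw [abs_le, mem_Icc, ← le_log_iff_exp_le hr, ← log_le_iff_le_exp hr]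

theorem tendsto_nhds_one_of_eventually_mem_Icc_exp {α : Type*} {l : Filter α} {r : α → ℝ}
    (h : ∀ ε > 0, ∀ᶠ x in l, r x ∈ Icc (exp (-ε)) (exp ε)) : Tendsto r l (𝓝 1) := by
  have hpos : ∀ᶠ x in l, 0 < r x := (h 1 one_pos).mono fun x hx => (exp_pos _).trans_le hx.1
  have hlog : Tendsto (fun x => log (r x)) l (𝓝 0) := by
    refine Metric.tendsto_nhds.2 fun ε hε => ?_
    filter_upwards [h (ε / 2) (half_pos hε), hpos] with x hx hrx
    rw [Real.dist_eq, sub_zero]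
    exact ((abs_log_le_iff_mem_Icc_exp hrx).2 hx).trans_lt (half_lt_self hε)
  simpa only [exp_zero] using ((continuous_exp.tendsto 0).comp hlog).congr'
    (hpos.mono fun x hx => exp_log hx)

theorem intervalIntegral.integral_mem_Icc_of_forall_mem_Icc {g : ℝ → ℝ} {a b m M : ℝ}
    (hab : a ≤ b) (hg : IntervalIntegrable g MeasureTheory.volume a b)
    (h : ∀ t ∈ Icc a b, g t ∈ Icc m M) : ∫ t in a..b, g t ∈ Icc ((b - a) * m) ((b - a) * M) := by
  constructor
  · simpa using integral_mono_on hab intervalIntegrable_const hg fun t ht => (h t ht).1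
  · simpa using integral_mono_on hab hg intervalIntegrable_const fun t ht => (h t ht).2

theorem hasDerivWithinAt_zero_of_isBigO {g h : ℝ → ℝ} {s : Set ℝ} {p : ℝ}
    (hh : HasDerivWithinAt h 0 s p) (hhp : h p = 0) (hgp : g p = 0) (hgh : g =O[𝓝[s] p] h) :
    HasDerivWithinAt g 0 s p := by
  rw [hasDerivWithinAt_iff_isLittleO] at hh ⊢
  simp only [hhp, hgp, smul_zero, sub_zero] at hh ⊢
  exact hgh.trans_isLittleO hh

theorem lipschitzOnWith_of_abs_derivWithin_le {g : ℝ → ℝ} {s : Set ℝ} {M : ℝ} (hs : Convex ℝ s)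
    (hg : DifferentiableOn ℝ g s) (hM : ∀ y ∈ s, |derivWithin g s y| ≤ M) :
    LipschitzOnWith M.toNNReal g s :=
  hs.lipschitzOnWith_of_nnnorm_derivWithin_le hg fun y hy => by
    rw [← NNReal.coe_le_coe, coe_nnnorm, Real.norm_eq_abs]
    exact (hM y hy).trans (le_coe_toNNReal M)

namespace IsFlowOn

variable {ξ f : ℝ → ℝ} {φ : ℝ → ℝ → ℝ} {a b p x M : ℝ} {K : NNReal}

theorem orbit_mem (hflow : IsFlowOn ξ φ a b) (hx : x ∈ Icc a b) (t : ℝ) : φ t x ∈ Icc a b :=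
  (hflow.2 x hx t).1

theorem hasDerivAt_orbit (hflow : IsFlowOn ξ φ a b) (hx : x ∈ Icc a b) (t : ℝ) :
    HasDerivAt (fun s => φ s x) (ξ (φ t x)) t :=
  (hflow.2 x hx t).2

theorem continuous_field_orbit (hflow : IsFlowOn ξ φ a b) (hξ : ContinuousOn ξ (Icc a b))
    (hx : x ∈ Icc a b) : Continuous fun t => ξ (φ t x) :=
  hξ.comp_continuous
    (continuous_iff_continuousAt.2 fun t => (hflow.hasDerivAt_orbit hx t).continuousAt)
    (hflow.orbit_mem hx)

theorem orbit_eq_of_field_eq_zero (hflow : IsFlowOn ξ φ a b) (hK : LipschitzOnWith K ξ (Icc a b))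
    (hx : x ∈ Icc a b) {t₀ : ℝ} (h : ξ (φ t₀ x) = 0) (t : ℝ) : φ t x = φ t₀ x :=
  congrFun (ODE_solution_unique_univ (v := fun _ => ξ) (s := fun _ => Icc a b) (t₀ := t₀)
    (fun _ => hK) (fun s => ⟨hflow.hasDerivAt_orbit hx s, hflow.orbit_mem hx s⟩)
    (fun s => ⟨h ▸ hasDerivAt_const s (φ t₀ x), hflow.orbit_mem hx t₀⟩) rfl) t

theorem field_orbit_ne_zero (hflow : IsFlowOn ξ φ a b) (hK : LipschitzOnWith K ξ (Icc a b))
    (hx : x ∈ Icc a b) (hξx : ξ x ≠ 0) (t : ℝ) : ξ (φ t x) ≠ 0 := fun h => by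
  have := hflow.orbit_eq_of_field_eq_zero hK hx h 0
  rw [hflow.1 x hx] at this
  exact hξx (this ▸ h)

theorem field_orbit_div_pos (hflow : IsFlowOn ξ φ a b) (hK : LipschitzOnWith K ξ (Icc a b))
    (hx : x ∈ Icc a b) (hξx : ξ x ≠ 0) (t : ℝ) : 0 < ξ (φ t x) / ξ x := by
  by_contra! h
  have h0 : (0 : ℝ) ∈ uIcc (ξ (φ 0 x)) (ξ (φ t x)) := by
    rw [hflow.1 x hx, mem_uIcc]
    rcases div_nonpos_iff.1 h with h | h
    exacts [Or.inl ⟨h.2, h.1⟩, Or.inr h]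
  obtain ⟨s, -, hs⟩ :=
    intermediate_value_uIcc (hflow.continuous_field_orbit hK.continuousOn hx).continuousOn h0
  exact hflow.field_orbit_ne_zero hK hx hξx s hs

theorem orbit_mem_uIcc (hflow : IsFlowOn ξ φ a b) (hK : LipschitzOnWith K ξ (Icc a b))
    (hx : x ∈ Icc a b) {t : ℝ} (ht : t ∈ Icc (0 : ℝ) 1) : φ t x ∈ uIcc x (φ 1 x) := by
  suffices φ t x ∈ uIcc (φ 0 x) (φ 1 x) by rwa [hflow.1 x hx] at this
  have ht' : t ∈ uIcc 0 1 := Icc_subset_uIcc ht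
  rcases eq_or_ne (ξ x) 0 with h0 | hne
  · rw [hflow.orbit_eq_of_field_eq_zero hK hx (t₀ := 0) (by rwa [hflow.1 x hx]) t]
    exact left_mem_uIcc
  have hsign := hflow.field_orbit_div_pos hK hx hne
  rcases hne.lt_or_gt with hneg | hpos
  · refine (strictAnti_of_deriv_neg (f := fun s => φ s x) fun s => ?_).antitone.mapsTo_uIcc ht'
    rw [(hflow.hasDerivAt_orbit hx s).deriv, ← div_mul_cancel₀ (ξ (φ s x)) hne]
    exact mul_neg_of_pos_of_neg (hsign s) hneg
  · refine (strictMono_of_deriv_pos (f := fun s => φ s x) fun s => ?_).monotone.mapsTo_uIcc ht'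
    rw [(hflow.hasDerivAt_orbit hx s).deriv]
    exact (div_pos_iff_of_pos_right hpos).1 (hsign s)

theorem field_orbit_div_mem_Icc (hflow : IsFlowOn ξ φ a b) (hK : LipschitzOnWith K ξ (Icc a b))
    (hξd : DifferentiableOn ℝ ξ (Icc a b)) (hx : x ∈ Icc a b) (hξx : ξ x ≠ 0) {C : ℝ}
    (hC : ∀ s ∈ Icc (0 : ℝ) 1, |derivWithin ξ (Icc a b) (φ s x)| ≤ C) {t : ℝ}
    (ht : t ∈ Icc (0 : ℝ) 1) : ξ (φ t x) / ξ x ∈ Icc (exp (-C)) (exp C) := by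
  have hne := hflow.field_orbit_ne_zero hK hx hξx
  have hlog (s : ℝ) :
      HasDerivAt (fun s => log (ξ (φ s x))) (derivWithin ξ (Icc a b) (φ s x)) s := by
    have h := ((hξd _ (hflow.orbit_mem hx s)).hasDerivWithinAt.comp_hasDerivAt s
      (hflow.hasDerivAt_orbit hx s) (Eventually.of_forall (hflow.orbit_mem hx))).log (hne s)
    rwa [Function.comp_apply, mul_div_cancel_right₀ _ (hne s)] at h
  have hbound := norm_image_sub_le_of_norm_deriv_le_segment'
    (fun s _ => (hlog s).hasDerivWithinAt) (fun s hs => hC s (Ico_subset_Icc_self hs)) t ht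
  rw [hflow.1 x hx, Real.norm_eq_abs, sub_zero] at hbound
  rw [← abs_log_le_iff_mem_Icc_exp (hflow.field_orbit_div_pos hK hx hξx t), log_div (hne t) hξx]
  exact hbound.trans
    (mul_le_of_le_one_right ((abs_nonneg _).trans (hC 0 ⟨le_rfl, zero_le_one⟩)) ht.2)

theorem time_one_sub_div_field_eq_integral (hflow : IsFlowOn ξ φ a b)
    (hξ : ContinuousOn ξ (Icc a b)) (hx : x ∈ Icc a b) :
    (φ 1 x - x) / ξ x = ∫ t in (0 : ℝ)..1, ξ (φ t x) / ξ x := by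
  rw [intervalIntegral.integral_div, intervalIntegral.integral_eq_sub_of_hasDerivAt
    (fun t _ => hflow.hasDerivAt_orbit hx t)
    ((hflow.continuous_field_orbit hξ hx).intervalIntegrable 0 1), hflow.1 x hx]

theorem time_one_sub_div_field_pos (hflow : IsFlowOn ξ φ a b)
    (hK : LipschitzOnWith K ξ (Icc a b)) (hx : x ∈ Icc a b) (hξx : ξ x ≠ 0) :
    0 < (φ 1 x - x) / ξ x := by
  rw [hflow.time_one_sub_div_field_eq_integral hK.continuousOn hx]
  exact intervalIntegral.intervalIntegral_pos_of_pos_on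
    (((hflow.continuous_field_orbit hK.continuousOn hx).div_const _).intervalIntegrable 0 1)
    (fun t _ => hflow.field_orbit_div_pos hK hx hξx t) zero_lt_one

theorem time_one_sub_div_field_mem_Icc (hflow : IsFlowOn ξ φ a b)
    (hK : LipschitzOnWith K ξ (Icc a b)) (hξd : DifferentiableOn ℝ ξ (Icc a b))
    (hx : x ∈ Icc a b) (hξx : ξ x ≠ 0) {C : ℝ}
    (hC : ∀ s ∈ Icc (0 : ℝ) 1, |derivWithin ξ (Icc a b) (φ s x)| ≤ C) :
    (φ 1 x - x) / ξ x ∈ Icc (exp (-C)) (exp C) := by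
  rw [hflow.time_one_sub_div_field_eq_integral hK.continuousOn hx]
  simpa using intervalIntegral.integral_mem_Icc_of_forall_mem_Icc zero_le_one
    (((hflow.continuous_field_orbit hK.continuousOn hx).div_const _).intervalIntegrable 0 1)
    fun t ht => hflow.field_orbit_div_mem_Icc hK hξd hx hξx hC ht

theorem eq_self_iff_field_eq_zero (hflow : IsFlowOn ξ φ a b)
    (htime1 : ∀ x ∈ Icc a b, φ 1 x = f x) (hK : LipschitzOnWith K ξ (Icc a b))
    (hx : x ∈ Icc a b) : f x = x ↔ ξ x = 0 := by
  rw [← htime1 x hx]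
  refine ⟨fun h => by_contra fun hne => ?_, fun h => ?_⟩
  · simpa [h] using hflow.time_one_sub_div_field_pos hK hx hne
  · simpa [hflow.1 x hx] using
      hflow.orbit_eq_of_field_eq_zero hK hx (t₀ := 0) (by rwa [hflow.1 x hx]) 1

theorem abs_log_abs_field_div_sub_le (hflow : IsFlowOn ξ φ a b)
    (htime1 : ∀ x ∈ Icc a b, φ 1 x = f x) (hK : LipschitzOnWith K ξ (Icc a b))
    (hξd : DifferentiableOn ℝ ξ (Icc a b)) (hx : x ∈ Icc a b) (hfx : f x ≠ x) {C : ℝ}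
    (hC : ∀ s ∈ Icc (0 : ℝ) 1, |derivWithin ξ (Icc a b) (φ s x)| ≤ C) :
    |log (abs (ξ x / (f x - x)))| ≤ C := by
  have h := hflow.time_one_sub_div_field_mem_Icc hK hξd hx
    ((hflow.eq_self_iff_field_eq_zero htime1 hK hx).not.1 hfx) hC
  rw [htime1 x hx] at h
  rw [log_abs, ← inv_div, log_inv, abs_neg]
  exact (abs_log_le_iff_mem_Icc_exp ((exp_pos _).trans_le h.1)).2 h

theorem abs_field_le_exp_mul_abs_sub (hflow : IsFlowOn ξ φ a b)
    (htime1 : ∀ x ∈ Icc a b, φ 1 x = f x) (hK : LipschitzOnWith K ξ (Icc a b))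
    (hξd : DifferentiableOn ℝ ξ (Icc a b)) (hM : ∀ y ∈ Icc a b, |derivWithin ξ (Icc a b) y| ≤ M)
    (hx : x ∈ Icc a b) : |ξ x| ≤ exp M * |f x - x| := by
  rcases eq_or_ne (ξ x) 0 with h0 | hne
  · rw [h0, abs_zero]
    positivity
  have h := (hflow.time_one_sub_div_field_mem_Icc hK hξd hx hne
    fun t _ => hM _ (hflow.orbit_mem hx t)).1
  rw [htime1 x hx] at h
  calc |ξ x| = exp M * (exp (-M) * |ξ x|) := by
        rw [← mul_assoc, ← exp_add, add_neg_cancel, exp_zero, one_mul]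
    _ ≤ exp M * (|(f x - x) / ξ x| * |ξ x|) := by gcongr; exact h.trans (le_abs_self _)
    _ = exp M * |f x - x| := by rw [← abs_mul, div_mul_cancel₀ _ hne]

theorem hasDerivWithinAt_field_zero (hflow : IsFlowOn ξ φ a b)
    (htime1 : ∀ x ∈ Icc a b, φ 1 x = f x) (hK : LipschitzOnWith K ξ (Icc a b))
    (hξd : DifferentiableOn ℝ ξ (Icc a b)) (hM : ∀ y ∈ Icc a b, |derivWithin ξ (Icc a b) y| ≤ M)
    (hp : p ∈ Icc a b) (hfp : f p = p) (hf : HasDerivAt f 1 p) :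
    HasDerivWithinAt ξ 0 (Icc a b) p := by
  refine hasDerivWithinAt_zero_of_isBigO (h := fun x => f x - x) ?_ (sub_eq_zero.2 hfp)
    ((hflow.eq_self_iff_field_eq_zero htime1 hK hp).1 hfp) ?_
  · simpa only [sub_self] using (hf.fun_sub (hasDerivAt_id' p)).hasDerivWithinAt
  · refine Asymptotics.IsBigO.of_bound (exp M) (eventually_nhdsWithin_of_forall fun x hx => ?_)
    simpa only [Real.norm_eq_abs] using hflow.abs_field_le_exp_mul_abs_sub htime1 hK hξd hM hx

theorem eventually_forall_orbit_abs_derivWithin_le (hflow : IsFlowOn ξ φ a b)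
    (htime1 : ∀ x ∈ Icc a b, φ 1 x = f x) (hK : LipschitzOnWith K ξ (Icc a b))
    (hξ' : Tendsto (derivWithin ξ (Icc a b)) (𝓝[Icc a b] p) (𝓝 0))
    (hf : Tendsto f (𝓝[Icc a b] p) (𝓝 p)) {ε : ℝ} (hε : 0 < ε) :
    ∀ᶠ x in 𝓝[Icc a b] p, ∀ t ∈ Icc (0 : ℝ) 1, |derivWithin ξ (Icc a b) (φ t x)| ≤ ε := by
  obtain ⟨δ, hδ, hball⟩ := Metric.mem_nhdsWithin_iff.1 (Metric.tendsto_nhds.1 hξ' ε hε)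
  have hnhds : Metric.ball p δ ∈ 𝓝 p := Metric.ball_mem_nhds p hδ
  filter_upwards [self_mem_nhdsWithin, mem_nhdsWithin_of_mem_nhds hnhds, hf hnhds]
    with x hx hxδ hfxδ t ht
  rw [Real.ball_eq_Ioo] at hball hxδ hfxδ
  have horbit : φ t x ∈ Ioo (p - δ) (p + δ) := ordConnected_Ioo.uIcc_subset hxδ hfxδ
    (htime1 x hx ▸ hflow.orbit_mem_uIcc hK hx ht)
  have hsmall := hball ⟨horbit, hflow.orbit_mem hx t⟩
  rw [mem_ofPred_eq, Real.dist_0_eq_abs] at hsmall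
  exact hsmall.le

theorem eventually_mem_Icc_exp (hflow : IsFlowOn ξ φ a b)
    (htime1 : ∀ x ∈ Icc a b, φ 1 x = f x) (hK : LipschitzOnWith K ξ (Icc a b))
    (hξd : DifferentiableOn ℝ ξ (Icc a b))
    (hξ' : Tendsto (derivWithin ξ (Icc a b)) (𝓝[Icc a b] p) (𝓝 0))
    (hf : Tendsto f (𝓝[Icc a b] p) (𝓝 p)) {ε : ℝ} (hε : 0 < ε) :
    ∀ᶠ x in 𝓝[{x | x ∈ Icc a b ∧ f x ≠ x}] p, ξ x ≠ 0 ∧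
      (f x - x) / ξ x ∈ Icc (exp (-ε)) (exp ε) ∧ ξ (f x) / ξ x ∈ Icc (exp (-ε)) (exp ε) := by
  filter_upwards [nhdsWithin_mono p (fun x hx => hx.1)
    (hflow.eventually_forall_orbit_abs_derivWithin_le htime1 hK hξ' hf hε),
    self_mem_nhdsWithin] with x hC hxS
  obtain ⟨hx, hfx⟩ := hxS
  have hne := (hflow.eq_self_iff_field_eq_zero htime1 hK hx).not.1 hfx
  rw [← htime1 x hx]
  exact ⟨hne, hflow.time_one_sub_div_field_mem_Icc hK hξd hx hne hC,
    hflow.field_orbit_div_mem_Icc hK hξd hx hne hC ⟨zero_le_one, le_rfl⟩⟩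

theorem tendsto_field_div_sub (hflow : IsFlowOn ξ φ a b)
    (htime1 : ∀ x ∈ Icc a b, φ 1 x = f x) (hK : LipschitzOnWith K ξ (Icc a b))
    (hξd : DifferentiableOn ℝ ξ (Icc a b))
    (hξ' : Tendsto (derivWithin ξ (Icc a b)) (𝓝[Icc a b] p) (𝓝 0))
    (hf : Tendsto f (𝓝[Icc a b] p) (𝓝 p)) :
    Tendsto (fun x => ξ x / (f x - x)) (𝓝[{x | x ∈ Icc a b ∧ f x ≠ x}] p) (𝓝 1) := by
  have h := tendsto_nhds_one_of_eventually_mem_Icc_exp fun ε hε =>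
    (hflow.eventually_mem_Icc_exp htime1 hK hξd hξ' hf hε).mono fun x hx => hx.2.1
  simpa only [inv_div, inv_one] using h.inv₀ one_ne_zero

theorem tendsto_field_comp_div_sub (hflow : IsFlowOn ξ φ a b)
    (htime1 : ∀ x ∈ Icc a b, φ 1 x = f x) (hK : LipschitzOnWith K ξ (Icc a b))
    (hξd : DifferentiableOn ℝ ξ (Icc a b))
    (hξ' : Tendsto (derivWithin ξ (Icc a b)) (𝓝[Icc a b] p) (𝓝 0))
    (hf : Tendsto f (𝓝[Icc a b] p) (𝓝 p)) :
    Tendsto (fun x => ξ (f x) / (f x - x)) (𝓝[{x | x ∈ Icc a b ∧ f x ≠ x}] p) (𝓝 1) := by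
  have hbounds := fun ε (hε : 0 < ε) => hflow.eventually_mem_Icc_exp htime1 hK hξd hξ' hf hε
  have hdisp := tendsto_nhds_one_of_eventually_mem_Icc_exp fun ε hε =>
    (hbounds ε hε).mono fun x hx => hx.2.1
  have hcomp := tendsto_nhds_one_of_eventually_mem_Icc_exp fun ε hε =>
    (hbounds ε hε).mono fun x hx => hx.2.2
  simpa only [div_one] using (hcomp.div hdisp one_ne_zero).congr'
    ((hbounds 1 one_pos).mono fun x hx => div_div_div_cancel_right₀ hx.1 _ _)

end IsFlowOn

namespace SmoothDiffeoI

variable {f finv : ℝ → ℝ}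

theorem strictMonoOn (hf : SmoothDiffeoI f) : StrictMonoOn f (Icc 0 1) :=
  strictMonoOn_of_deriv_pos (convex_Icc 0 1) hf.1.continuous.continuousOn
    fun x hx => hf.2.2.2.1 x (interior_subset hx)

theorem surjOn (hf : SmoothDiffeoI f) : SurjOn f (Icc 0 1) (Icc 0 1) := by
  simpa [SurjOn, hf.2.1, hf.2.2.1] using
    intermediate_value_Icc zero_le_one hf.1.continuous.continuousOn

theorem inv_mem_Icc (hf : SmoothDiffeoI f) (hfinv : IsInverseOn finv f (Icc 0 1)) {x : ℝ}
    (hx : x ∈ Icc (0 : ℝ) 1) : finv x ∈ Icc (0 : ℝ) 1 := by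
  obtain ⟨y, hy, rfl⟩ := hf.surjOn hx
  rwa [hfinv.1 y hy]

theorem tendsto_inv (hf : SmoothDiffeoI f) (hfinv : IsInverseOn finv f (Icc 0 1)) :
    Tendsto finv (𝓝[{x | x ∈ Icc (0 : ℝ) 1 ∧ f x ≠ x}] 0)
      (𝓝[{x | x ∈ Icc (0 : ℝ) 1 ∧ f x ≠ x}] 0) := by
  refine tendsto_nhdsWithin_iff.2 ⟨tendsto_order.2 ⟨fun c hc => ?_, fun c hc => ?_⟩,
    eventually_nhdsWithin_of_forall fun x hx => ⟨hf.inv_mem_Icc hfinv hx.1, fun h => hx.2 ?_⟩⟩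
  · exact eventually_nhdsWithin_of_forall fun x hx => hc.trans_le (hf.inv_mem_Icc hfinv hx.1).1
  · have hd : min c 1 ∈ Icc (0 : ℝ) 1 := ⟨le_min hc.le zero_le_one, min_le_right _ _⟩
    have hfd : 0 < f (min c 1) :=
      hf.2.1 ▸ hf.strictMonoOn ⟨le_rfl, zero_le_one⟩ hd (lt_min hc one_pos)
    filter_upwards [nhdsWithin_le_nhds (Iio_mem_nhds hfd), self_mem_nhdsWithin] with x hxd hx
    refine ((hf.strictMonoOn.lt_iff_lt (hf.inv_mem_Icc hfinv hx.1) hd).1 ?_).trans_le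
      (min_le_left _ _)
    rwa [hfinv.2 x hx.1]
  · have hfix : finv x = x := h.symm.trans (hfinv.2 x hx.1)
    rwa [hfix] at h

end SmoothDiffeoI

theorem szekeres_field_equiv_displacement_general (D : Set ℝ)
    (f finv ξ : ℝ → ℝ) (φ : ℝ → ℝ → ℝ)
    (hf : DiffStar D f) (hfinv : IsInverseOn finv f (Icc (0 : ℝ) 1))
    (hξ : ContDiffOn ℝ 1 ξ (Icc (0 : ℝ) 1))
    (hflow : IsFlowOn ξ φ 0 1) (htime1 : ∀ x ∈ Icc (0 : ℝ) 1, φ 1 x = f x) :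
    ((∀ x ∈ Icc (0 : ℝ) 1, f x = x → ξ x = 0) ∧
      ∃ M : ℝ, ∀ x ∈ Icc (0 : ℝ) 1, f x ≠ x → |Real.log (abs (ξ x / (f x - x)))| ≤ M) ∧
    (deriv f 0 = 1 → iteratedDeriv 2 f 0 = 0 →
      (Filter.Tendsto (fun x => ξ x / (f x - x))
        (nhdsWithin 0 {x : ℝ | x ∈ Ioo (0 : ℝ) 1 ∧ f x ≠ x}) (nhds 1) ∧
       Filter.Tendsto (fun x => ξ x / (x - finv x))
        (nhdsWithin 0 {x : ℝ | x ∈ Ioo (0 : ℝ) 1 ∧ f x ≠ x}) (nhds 1))) := by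
  obtain ⟨hfd, -⟩ := hf
  have h0I : (0 : ℝ) ∈ Icc (0 : ℝ) 1 := ⟨le_rfl, zero_le_one⟩
  have hξd : DifferentiableOn ℝ ξ (Icc 0 1) := hξ.differentiableOn one_ne_zero
  have hξ'c := hξ.continuousOn_derivWithin (uniqueDiffOn_Icc one_pos) le_rfl
  obtain ⟨M, hM⟩ := isCompact_Icc.exists_bound_of_continuousOn hξ'c
  have hK := lipschitzOnWith_of_abs_derivWithin_le (convex_Icc 0 1) hξd hM
  refine ⟨⟨fun x hx => (hflow.eq_self_iff_field_eq_zero htime1 hK hx).1, M, fun x hx hfx =>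
    hflow.abs_log_abs_field_div_sub_le htime1 hK hξd hx hfx fun t _ => hM _ (hflow.orbit_mem hx t)⟩,
    fun hf'0 _ => ?_⟩
  have hf0 : HasDerivAt f 1 0 := hf'0 ▸ (hfd.1.differentiable (by simp) 0).hasDerivAt
  have hξ'0 := (hflow.hasDerivWithinAt_field_zero htime1 hK hξd hM h0I hfd.2.1 hf0).derivWithin
    (uniqueDiffOn_Icc one_pos 0 h0I)
  have hξ' : Tendsto (derivWithin ξ (Icc 0 1)) (𝓝[Icc 0 1] 0) (𝓝 0) := by
    simpa only [hξ'0] using (hξ'c 0 h0I).tendsto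
  have hfc : Tendsto f (𝓝[Icc 0 1] 0) (𝓝 0) := by
    simpa only [hfd.2.1] using (hfd.1.continuous.continuousWithinAt (s := Icc 0 1) (x := 0)).tendsto
  have hS : 𝓝[{x | x ∈ Ioo (0 : ℝ) 1 ∧ f x ≠ x}] 0 ≤ 𝓝[{x | x ∈ Icc 0 1 ∧ f x ≠ x}] 0 :=
    nhdsWithin_mono 0 fun x hx => ⟨Ioo_subset_Icc_self hx.1, hx.2⟩
  refine ⟨(hflow.tendsto_field_div_sub htime1 hK hξd hξ' hfc).mono_left hS, ?_⟩
  refine (((hflow.tendsto_field_comp_div_sub htime1 hK hξd hξ' hfc).comp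
    (hfd.tendsto_inv hfinv)).mono_left hS).congr' ?_
  filter_upwards [self_mem_nhdsWithin] with x hx
  simp only [Function.comp_apply, hfinv.2 x (Ioo_subset_Icc_self hx.1)]

/-- Let `f ∈ Diff*_∂[0,1]` be the time-1 map of the flow of a `C¹` vector field `ξ` on
`[0,1]`. Then (a) `log |ξ/(f − id)|` is bounded on `[0,1] \ Fix(f)` (and `ξ` vanishes on
`Fix(f)`), and (b) if `Df(0) = 1` and `D²f(0) = 0`, then
`ξ(x) ∼ f(x) − x ∼ x − f⁻¹(x)` as `x → 0`. -/
theorem szekeres_field_equiv_displacement (D : Set ℝ) (hD : D ⊆ ({0, 1} : Set ℝ))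
    (f finv ξ : ℝ → ℝ) (φ : ℝ → ℝ → ℝ)
    (hf : DiffStar D f) (hfinv : IsInverseOn finv f (Icc (0 : ℝ) 1))
    (hξ : ContDiffOn ℝ 1 ξ (Icc (0 : ℝ) 1))
    (hflow : IsFlowOn ξ φ 0 1) (htime1 : ∀ x ∈ Icc (0 : ℝ) 1, φ 1 x = f x) :
    ((∀ x ∈ Icc (0 : ℝ) 1, f x = x → ξ x = 0) ∧
      ∃ M : ℝ, ∀ x ∈ Icc (0 : ℝ) 1, f x ≠ x → |Real.log (abs (ξ x / (f x - x)))| ≤ M) ∧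
    (deriv f 0 = 1 → iteratedDeriv 2 f 0 = 0 →
      (Filter.Tendsto (fun x => ξ x / (f x - x))
        (nhdsWithin 0 {x : ℝ | x ∈ Ioo (0 : ℝ) 1 ∧ f x ≠ x}) (nhds 1) ∧
       Filter.Tendsto (fun x => ξ x / (x - finv x))
        (nhdsWithin 0 {x : ℝ | x ∈ Ioo (0 : ℝ) 1 ∧ f x ≠ x}) (nhds 1))) :=
  szekeres_field_equiv_displacement_general D f finv ξ φ hf hfinv hξ hflow htime1
end

section
/- (Sergeraert) Let g : [0,1] → ℝ be a C^∞ function which is infinitely flat at 0, i.e., g and all its derivatives vanish at 0. Then for all n ∈ ℕ and all η > 0, one has ‖g‖_{n,[0,x]} = O(‖g‖_{0,[0,x]}^{1−η}) as x → 0. -/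
/-!
Flatness bounds `M = sup_{[0,x]} |g|` by `L xᴺ` for every `N`, so the scale `s = M^θ`, with
`θ = η / (n + 1)`, is much smaller than `x` once `Nθ ≥ 2`. At that scale a finite difference
together with the mean value theorem bounds `g⁽ⁱ⁾` on `[0,x]` by `2ⁱ M / sⁱ` plus `i s` times a
bound for `g⁽ⁱ⁺¹⁾`. Iterating up to order `n + N`, where `g⁽ⁿ⁺ᴺ⁾` is bounded on `[0,1]`, gives
`|g⁽ⁱ⁾| ≲ M / sⁱ + sᴺ ≤ M / sⁿ⁺¹ + M = M^(1-η) + M`.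
-/

set_option autoImplicit false

open Set

open scoped ContDiff

variable {f : ℝ → ℝ}

theorem hasDerivAt_iteratedDeriv_of_contDiff (hf : ContDiff ℝ ∞ f) (i : ℕ) (t : ℝ) :
    HasDerivAt (iteratedDeriv i f) (iteratedDeriv (i + 1) f t) t := by
  rw [iteratedDeriv_succ]
  exact (hf.differentiable_iteratedDeriv i (by exact_mod_cast WithTop.coe_lt_top _) t).hasDerivAt

/-- The `i`-th forward difference of step `s` is at most `2ⁱ M` and equals `sⁱ f⁽ⁱ⁾(ξ)` for some
`ξ` in the window. -/
theorem exists_abs_iteratedDeriv_le_of_abs_le (hf : ContDiff ℝ ∞ f) {s : ℝ} (hs : 0 < s) (i : ℕ)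
    {a M : ℝ} (hM : ∀ t ∈ Icc a (a + i * s), |f t| ≤ M) :
    ∃ ξ ∈ Icc a (a + i * s), |iteratedDeriv i f ξ| ≤ 2 ^ i * M / s ^ i := by
  induction i generalizing f M with
  | zero => exact ⟨a, by simp, by simpa using hM a (by simp)⟩
  | succ i ih =>
    set Δf : ℝ → ℝ := fun t => f (t + s) - f t
    have hΔf : ContDiff ℝ ∞ Δf := (hf.comp (contDiff_id.add contDiff_const)).sub hf
    have hΔM : ∀ t ∈ Icc a (a + i * s), |Δf t| ≤ 2 * M := fun t ht => by
      push_cast at hM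
      have h₁ := hM t ⟨ht.1, by linarith [ht.2]⟩
      have h₂ := hM (t + s) ⟨by linarith [ht.1], by linarith [ht.2]⟩
      linarith [abs_sub (f (t + s)) (f t)]
    obtain ⟨ξ, hξ, hΔξ⟩ := ih hΔf hΔM
    have hΔξ_eq : iteratedDeriv i Δf ξ = iteratedDeriv i f (ξ + s) - iteratedDeriv i f ξ := by
      have hf_at : ∀ x, ContDiffAt ℝ i f x := fun x =>
        (hf.of_le (by exact_mod_cast le_top)).contDiffAt
      have hshift : ContDiffAt ℝ i (fun t => f (t + s)) ξ :=
        (hf_at (ξ + s)).comp ξ (contDiffAt_id.add contDiffAt_const)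
      rw [iteratedDeriv_fun_sub hshift (hf_at ξ), iteratedDeriv_comp_add_const]
    obtain ⟨ζ, hζ, hslope⟩ := exists_hasDerivAt_eq_slope (iteratedDeriv i f)
      (iteratedDeriv (i + 1) f) (lt_add_of_pos_right ξ hs)
      (hf.continuous_iteratedDeriv i (by exact_mod_cast le_top)).continuousOn
      (fun t _ => hasDerivAt_iteratedDeriv_of_contDiff hf i t)
    refine ⟨ζ, ⟨hξ.1.trans hζ.1.le, by push_cast; linarith [hζ.2, hξ.2]⟩, ?_⟩
    rw [hslope, add_sub_cancel_left, ← hΔξ_eq, abs_div, abs_of_pos hs, div_le_iff₀ hs]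
    calc |iteratedDeriv i Δf ξ| ≤ 2 ^ i * (2 * M) / s ^ i := hΔξ
      _ = 2 ^ (i + 1) * M / s ^ (i + 1) * s := by field_simp; ring

theorem exists_Icc_subset_Icc_mem {a b y ℓ : ℝ} (hℓ₀ : 0 ≤ ℓ) (hℓ : ℓ ≤ b - a) (hy : y ∈ Icc a b) :
    ∃ c, Icc c (c + ℓ) ⊆ Icc a b ∧ y ∈ Icc c (c + ℓ) := by
  rcases le_total y (b - ℓ) with h | h
  · exact ⟨y, Icc_subset_Icc hy.1 (by linarith), le_rfl, by linarith⟩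
  · exact ⟨b - ℓ, Icc_subset_Icc (by linarith) (by linarith), h, by linarith [hy.2]⟩

theorem abs_iteratedDeriv_le_of_abs_le_of_abs_iteratedDeriv_succ_le (hf : ContDiff ℝ ∞ f)
    {a b s M B : ℝ} {i : ℕ} (hs : 0 < s) (hwin : i * s ≤ b - a)
    (hM : ∀ t ∈ Icc a b, |f t| ≤ M) (hB : ∀ t ∈ Icc a b, |iteratedDeriv (i + 1) f t| ≤ B)
    {y : ℝ} (hy : y ∈ Icc a b) :
    |iteratedDeriv i f y| ≤ 2 ^ i * M / s ^ i + i * s * B := by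
  obtain ⟨c, hcab, hyc⟩ := exists_Icc_subset_Icc_mem (by positivity) hwin hy
  obtain ⟨ξ, hξ, hfξ⟩ :=
    exists_abs_iteratedDeriv_le_of_abs_le hf hs i fun t ht => hM t (hcab ht)
  have hlip : |iteratedDeriv i f y - iteratedDeriv i f ξ| ≤ B * |y - ξ| :=
    (convex_Icc a b).norm_image_sub_le_of_norm_hasDerivWithin_le
      (fun t _ => (hasDerivAt_iteratedDeriv_of_contDiff hf i t).hasDerivWithinAt) hB
      (hcab hξ) hy
  have hyξ : |y - ξ| ≤ i * s :=
    abs_sub_le_iff.2 ⟨by linarith [hyc.2, hξ.1], by linarith [hyc.1, hξ.2]⟩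
  have hB0 : 0 ≤ B := (abs_nonneg _).trans (hB y hy)
  calc |iteratedDeriv i f y|
      ≤ |iteratedDeriv i f ξ| + |iteratedDeriv i f y - iteratedDeriv i f ξ| := by
        linarith [abs_sub_abs_le_abs_sub (iteratedDeriv i f y) (iteratedDeriv i f ξ)]
    _ ≤ 2 ^ i * M / s ^ i + B * (i * s) :=
        add_le_add hfξ (hlip.trans (mul_le_mul_of_nonneg_left hyξ hB0))
    _ = 2 ^ i * M / s ^ i + i * s * B := by ring

theorem abs_iteratedDeriv_le_interpolation (hf : ContDiff ℝ ∞ f) {a b s M K : ℝ} {m : ℕ}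
    (hs : 0 < s) (hwin : m * s ≤ b - a) (hM : ∀ t ∈ Icc a b, |f t| ≤ M)
    (hK : ∀ t ∈ Icc a b, |iteratedDeriv m f t| ≤ K) :
    ∀ k i : ℕ, i + k = m → ∀ y ∈ Icc a b,
      |iteratedDeriv i f y| ≤ (2 ^ m + m) ^ k * (M / s ^ i + K * s ^ k)
  | 0, i, hik, y, hy => by
    subst hik
    have : 0 ≤ M / s ^ i := div_nonneg ((abs_nonneg _).trans (hM y hy)) (by positivity)
    simpa using (hK y hy).trans (le_add_of_nonneg_left this)
  | k + 1, i, hik, y, hy => by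
    have hM0 : 0 ≤ M := (abs_nonneg _).trans (hM y hy)
    have hK0 : 0 ≤ K := (abs_nonneg _).trans (hK y hy)
    have him : (i : ℝ) ≤ m := by exact_mod_cast (by omega : i ≤ m)
    have hstep := abs_iteratedDeriv_le_of_abs_le_of_abs_iteratedDeriv_succ_le hf hs
      (le_trans (by gcongr) hwin) hM
      (abs_iteratedDeriv_le_interpolation hf hs hwin hM hK k (i + 1) (by omega)) hy
    set A : ℝ := 2 ^ m + m
    set P := M / s ^ i
    set Q := K * s ^ (k + 1)
    have hA : 1 ≤ A ^ k :=
      one_le_pow₀ (le_add_of_le_of_nonneg (one_le_pow₀ one_le_two) m.cast_nonneg)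
    have hP : 0 ≤ P := by positivity
    have hQ : 0 ≤ Q := by positivity
    have h2i : (2 : ℝ) ^ i ≤ 2 ^ m * A ^ k :=
      (pow_le_pow_right₀ one_le_two (by omega)).trans (le_mul_of_one_le_right (by positivity) hA)
    calc |iteratedDeriv i f y|
        ≤ 2 ^ i * M / s ^ i + i * s * (A ^ k * (M / s ^ (i + 1) + K * s ^ k)) := hstep
      _ = 2 ^ i * P + i * (A ^ k * P) + i * (A ^ k * Q) := by
        simp only [P, Q]; field_simp; ring
      _ ≤ 2 ^ m * A ^ k * P + m * (A ^ k * P) + m * (A ^ k * Q) + 2 ^ m * A ^ k * Q := by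
        have : 0 ≤ 2 ^ m * A ^ k * Q := by positivity
        linarith [mul_le_mul_of_nonneg_right h2i hP,
          mul_le_mul_of_nonneg_right him (by positivity : 0 ≤ A ^ k * P),
          mul_le_mul_of_nonneg_right him (by positivity : 0 ≤ A ^ k * Q)]
      _ = A ^ (k + 1) * (P + Q) := by simp only [A]; ring

theorem abs_le_mul_pow_of_iteratedDeriv_eq_zero (hf : ContDiff ℝ ∞ f) {N : ℕ}
    (hflat : ∀ j < N, iteratedDeriv j f 0 = 0) {x L : ℝ}
    (hL : ∀ t ∈ Icc 0 x, |iteratedDeriv N f t| ≤ L) : ∀ y ∈ Icc 0 x, |f y| ≤ L * y ^ N := by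
  induction N generalizing f with
  | zero => simpa using hL
  | succ N ih =>
    intro y hy
    obtain ⟨hf_diff, hf'⟩ := contDiff_infty_iff_deriv.1 hf
    have hL0 : 0 ≤ L := (abs_nonneg _).trans (hL 0 ⟨le_rfl, hy.1.trans hy.2⟩)
    have hf'_le : ∀ t ∈ Icc 0 x, |deriv f t| ≤ L * t ^ N :=
      ih hf' (fun j hj => by rw [← iteratedDeriv_succ']; exact hflat (j + 1) (by omega))
        (by simpa only [iteratedDeriv_succ'] using hL)
    have hmvt : |f y - f 0| ≤ L * y ^ N * |y - 0| :=
      (convex_Icc 0 y).norm_image_sub_le_of_norm_deriv_le (fun t _ => hf_diff t)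
        (fun t ht => (hf'_le t ⟨ht.1, ht.2.trans hy.2⟩).trans
          (mul_le_mul_of_nonneg_left (pow_le_pow_left₀ ht.1 ht.2 N) hL0))
        ⟨le_rfl, hy.1⟩ ⟨hy.1, le_rfl⟩
    have hf0 : f 0 = 0 := by simpa using hflat 0 (by omega)
    rwa [hf0, sub_zero, sub_zero, abs_of_nonneg hy.1, mul_assoc, ← pow_succ] at hmvt

theorem iteratedDeriv_eqOn_zero_of_eqOn_zero (hf : ContDiff ℝ ∞ f) {a b : ℝ} (hab : a < b)
    (h : EqOn f 0 (Icc a b)) (i : ℕ) : EqOn (iteratedDeriv i f) 0 (Icc a b) := by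
  have hIoo : EqOn (iteratedDeriv i f) 0 (Ioo a b) := fun t ht => by
    rw [(h.mono Ioo_subset_Icc_self).iteratedDeriv_of_isOpen isOpen_Ioo i ht]
    simp
  simpa [closure_Ioo hab.ne] using
    hIoo.closure (hf.continuous_iteratedDeriv i (by exact_mod_cast le_top)) continuous_const

theorem exists_nonneg_abs_iteratedDeriv_le (hf : ContDiff ℝ ∞ f) (m : ℕ) (a b : ℝ) :
    ∃ K ≥ 0, ∀ t ∈ Icc a b, |iteratedDeriv m f t| ≤ K := by
  obtain ⟨K, hK⟩ := isCompact_Icc.exists_bound_of_continuousOn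
    (hf.continuous_iteratedDeriv m (by exact_mod_cast le_top)).continuousOn
  exact ⟨max K 0, le_max_right _ _, fun t ht => (hK t ht).trans (le_max_left _ _)⟩

theorem abs_le_iSup_Icc (hf : Continuous f) {a b t : ℝ} (ht : t ∈ Icc a b) :
    |f t| ≤ ⨆ z : Icc a b, |f z| :=
  le_ciSup (isCompact_range (hf.abs.comp continuous_subtype_val)).bddAbove ⟨t, ht⟩

theorem abs_iteratedDeriv_le_mul_rpow (hf : ContDiff ℝ ∞ f) {a b M K θ : ℝ} {n N i : ℕ}
    (hθ : 0 < θ) (hNθ : 1 ≤ N * θ) (hM0 : 0 < M) (hM1 : M ≤ 1)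
    (hwin : (n + N : ℕ) * M ^ θ ≤ b - a) (hM : ∀ t ∈ Icc a b, |f t| ≤ M)
    (hK : ∀ t ∈ Icc a b, |iteratedDeriv (n + N) f t| ≤ K) (hi : i ≤ n) {y : ℝ}
    (hy : y ∈ Icc a b) :
    |iteratedDeriv i f y| ≤
      (2 ^ (n + N) + (n + N : ℕ)) ^ (n + N) * (1 + K) * M ^ (1 - (n + 1) * θ) := by
  set s := M ^ θ
  set η := (n + 1) * θ
  have hs : 0 < s := Real.rpow_pos_of_pos hM0 θ
  have hs1 : s ≤ 1 := Real.rpow_le_one hM0.le hM1 hθ.le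
  have hK0 : 0 ≤ K := (abs_nonneg _).trans (hK y hy)
  have hMη : M ≤ M ^ (1 - η) := by
    have : 0 ≤ η := by positivity
    simpa using Real.rpow_le_rpow_of_exponent_ge hM0 hM1 (by linarith : 1 - η ≤ 1)
  have hi' : i ≤ n + 1 := by omega
  have hfirst : M / s ^ i ≤ M ^ (1 - η) :=
    calc M / s ^ i ≤ M / s ^ (n + 1) :=
          div_le_div_of_nonneg_left hM0.le (pow_pos hs _) (pow_le_pow_of_le_one hs.le hs1 hi')
      _ = M / M ^ η := by
        rw [← Real.rpow_natCast, ← Real.rpow_mul hM0.le, mul_comm]; push_cast; rfl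
      _ = M ^ (1 - η) := by rw [Real.rpow_sub hM0, Real.rpow_one]
  have hsecond : s ^ (n + N - i) ≤ M ^ (1 - η) :=
    calc s ^ (n + N - i) ≤ s ^ N := pow_le_pow_of_le_one hs.le hs1 (by omega)
      _ = M ^ ((N : ℝ) * θ) := by rw [← Real.rpow_natCast, ← Real.rpow_mul hM0.le, mul_comm]
      _ ≤ M := by simpa using Real.rpow_le_rpow_of_exponent_ge hM0 hM1 hNθ
      _ ≤ M ^ (1 - η) := hMη
  have hA : 1 ≤ (2 : ℝ) ^ (n + N) + (n + N : ℕ) :=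
    le_add_of_le_of_nonneg (one_le_pow₀ one_le_two) (Nat.cast_nonneg _)
  calc |iteratedDeriv i f y|
      ≤ (2 ^ (n + N) + (n + N : ℕ)) ^ (n + N - i) * (M / s ^ i + K * s ^ (n + N - i)) :=
        abs_iteratedDeriv_le_interpolation hf hs hwin hM hK _ i (by omega) y hy
    _ ≤ (2 ^ (n + N) + (n + N : ℕ)) ^ (n + N) * (M ^ (1 - η) + K * M ^ (1 - η)) := by
        gcongr
        omega
    _ = _ := by ring

theorem rpow_le_mul_sq_of_le_mul_pow {M L x θ : ℝ} {N : ℕ} (hM0 : 0 ≤ M) (hL0 : 0 ≤ L)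
    (hx0 : 0 < x) (hx1 : x ≤ 1) (hθ : 0 ≤ θ) (hNθ : 2 ≤ N * θ) (hMx : M ≤ L * x ^ N) :
    M ^ θ ≤ L ^ θ * x ^ 2 :=
  calc M ^ θ ≤ (L * x ^ N) ^ θ := Real.rpow_le_rpow hM0 hMx hθ
    _ = L ^ θ * x ^ ((N : ℝ) * θ) := by
      rw [Real.mul_rpow hL0 (by positivity), ← Real.rpow_natCast, ← Real.rpow_mul hx0.le]
    _ ≤ L ^ θ * x ^ 2 := by
      gcongr
      exact_mod_cast Real.rpow_le_rpow_of_exponent_ge hx0 hx1 hNθ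

theorem abs_iteratedDeriv_le_mul_rpow_of_le_mul_pow (hf : ContDiff ℝ ∞ f)
    {x M K L θ : ℝ} {n N i : ℕ} (hθ : 0 < θ) (hNθ : 2 ≤ N * θ) (hx0 : 0 < x) (hx1 : x < 1)
    (hL0 : 0 ≤ L) (hxL : (n + N : ℕ) * L ^ θ * x ≤ 1) (hM : ∀ t ∈ Icc 0 x, |f t| ≤ M)
    (hMx : M ≤ L * x ^ N) (hK : ∀ t ∈ Icc 0 x, |iteratedDeriv (n + N) f t| ≤ K)
    (hK0 : 0 ≤ K) (hi : i ≤ n) {y : ℝ} (hy : y ∈ Icc 0 x) :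
    |iteratedDeriv i f y| ≤
      (2 ^ (n + N) + (n + N : ℕ)) ^ (n + N) * (1 + K) * M ^ (1 - (n + 1) * θ) := by
  rcases ((abs_nonneg _).trans (hM 0 ⟨le_rfl, hx0.le⟩)).eq_or_lt with hM0 | hM0
  · have hf0 : EqOn f 0 (Icc 0 x) := fun t ht => abs_nonpos_iff.1 (hM0 ▸ hM t ht)
    rw [iteratedDeriv_eqOn_zero_of_eqOn_zero hf hx0 hf0 i hy, Pi.zero_apply, abs_zero]
    positivity
  have hwin : (n + N : ℕ) * M ^ θ ≤ x - 0 := by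
    have := rpow_le_mul_sq_of_le_mul_pow hM0.le hL0 hx0 hx1.le hθ.le hNθ hMx
    nlinarith
  have hM1 : M ≤ 1 := by
    have hN : (1 : ℝ) ≤ (n + N : ℕ) := by
      rcases Nat.eq_zero_or_pos N with rfl | hN
      · norm_num at hNθ
      · exact_mod_cast (by omega : 1 ≤ n + N)
    by_contra! h
    nlinarith [Real.one_lt_rpow h hθ]
  exact abs_iteratedDeriv_le_mul_rpow hf hθ (by linarith) hM0 hM1 hwin hM hK hi hy

/-- **Sergeraert's estimate.** Let `g : [0,1] → ℝ` be a `C^∞` function which is infinitely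
flat at `0`. Then for all `n ∈ ℕ` and `η > 0`,
`‖g‖_{n,[0,x]} = O(‖g‖_{0,[0,x]}^{1−η})` as `x → 0`. -/
theorem sergeraert_flat_estimate (g : ℝ → ℝ)
    (hg : ContDiff ℝ (⊤ : ℕ∞) g)
    (hflat : ∀ n : ℕ, iteratedDeriv n g 0 = 0)
    (n : ℕ) (η : ℝ) (hη : 0 < η) :
    ∃ C > (0 : ℝ), ∃ δ > (0 : ℝ), ∀ x ∈ Ioo (0 : ℝ) 1, x < δ →
      ∀ i ≤ n, ∀ y ∈ Icc (0 : ℝ) x,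
        |iteratedDeriv i g y| ≤ C * (⨆ z : Icc (0 : ℝ) x, |g z.1|) ^ ((1 : ℝ) - η) := by
  set θ := η / (n + 1)
  have hθ : 0 < θ := by positivity
  have hηθ : (n + 1) * θ = η := mul_div_cancel₀ _ (by positivity)
  obtain ⟨N, hNθ⟩ : ∃ N : ℕ, 2 ≤ N * θ := ⟨⌈2 / θ⌉₊, (div_le_iff₀ hθ).1 (Nat.le_ceil _)⟩
  obtain ⟨K, hK0, hK⟩ := exists_nonneg_abs_iteratedDeriv_le hg (n + N) 0 1
  obtain ⟨L, hL0, hL⟩ := exists_nonneg_abs_iteratedDeriv_le hg N 0 1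
  refine ⟨(2 ^ (n + N) + (n + N : ℕ)) ^ (n + N) * (1 + K), by positivity,
    1 / ((n + N : ℕ) * L ^ θ + 1), by positivity, ?_⟩
  rintro x ⟨hx0, hx1⟩ hxδ i hi y hy
  have hxL : (n + N : ℕ) * L ^ θ * x ≤ 1 := by
    rw [lt_div_iff₀ (by positivity)] at hxδ
    nlinarith
  have hsub : Icc 0 x ⊆ Icc 0 1 := Icc_subset_Icc_right hx1.le
  have hgM : ∀ t ∈ Icc 0 x, |g t| ≤ ⨆ z : Icc (0 : ℝ) x, |g z.1| :=
    fun t ht => abs_le_iSup_Icc hg.continuous ht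
  have hMx : ⨆ z : Icc (0 : ℝ) x, |g z.1| ≤ L * x ^ N := by
    have := (nonempty_Icc.2 hx0.le).to_subtype
    refine ciSup_le fun z => (abs_le_mul_pow_of_iteratedDeriv_eq_zero hg (fun j _ => hflat j)
      (fun t ht => hL t (hsub ht)) z.1 z.2).trans ?_
    gcongr
    exacts [z.2.1, z.2.2]
  simpa [hηθ] using abs_iteratedDeriv_le_mul_rpow_of_le_mul_pow hg hθ hNθ hx0 hx1 hL0 hxL hgM
    hMx (fun t ht => hK t (hsub ht)) hK0 hi hy
end

section
/- Let f be an orientation-preserving C^∞ diffeomorphism of the circle 𝕋¹ = ℝ/ℤ with irrational rotation number, and let g be an orientation-preserving homeomorphism of 𝕋¹ commuting with f. If g has a fixed point, then g = id. -/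
set_option autoImplicit false

open Set Filter

/-- `F : ℝ → ℝ` is the lift of an orientation-preserving `C^∞` diffeomorphism of the
circle `𝕋¹ = ℝ/ℤ`. -/
def SmoothCircleLift (F : ℝ → ℝ) : Prop :=
  ContDiff ℝ (⊤ : ℕ∞) F ∧ (∀ x : ℝ, F (x + 1) = F x + 1) ∧ ∀ x : ℝ, 0 < deriv F x

/-- `G : ℝ → ℝ` is the lift of an orientation-preserving homeomorphism of the circle. -/
def CircleHomeoLift (G : ℝ → ℝ) : Prop :=
  Continuous G ∧ StrictMono G ∧ Function.Surjective G ∧ ∀ x : ℝ, G (x + 1) = G x + 1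

/-- The circle map with lift `F` has rotation number (the class mod `ℤ` of) `ρ`. -/
def HasRotationNumber (F : ℝ → ℝ) (ρ : ℝ) : Prop :=
  Tendsto (fun n : ℕ => F^[n] 0 / n) atTop (nhds ρ)

/-!
The set of `x` with `G x - x ∈ ℤ` is nonempty, closed and invariant under `f` and under integer
translations, and `G x - x` is continuous, so it suffices that such a set is all of `ℝ` (Denjoy).
Otherwise a minimal such set `K` has a complementary gap `(a, b)`. As `f` has no periodic points,
the iterates of the gap are pairwise disjoint modulo `ℤ`, so their lengths `ℓₙ` are summable.
Replacing the gap by a far iterate makes `∑ ℓₙ` small, and then the Lipschitz bound on `log f'`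
(Schwartz's argument) shows that `fⁿ` maps `[a - ℓ₀ / 2, b]` onto an interval of length at most
`2 ℓₙ → 0`. Since `a` is recurrent in the minimal set `K`, some `fⁿ + m` maps this interval into
itself, and its fixed point is a periodic point of `f`.
-/

open Topology Function Real

theorem sum_sub_le_of_pairwiseDisjoint_Ioo {ι : Type*} (s : Finset ι) {u v : ι → ℝ} {A B : ℝ}
    (hAB : A ≤ B) (huv : ∀ i ∈ s, u i ≤ v i) (hsub : ∀ i ∈ s, Ioo (u i) (v i) ⊆ Icc A B)
    (hdisj : (s : Set ι).PairwiseDisjoint fun i => Ioo (u i) (v i)) :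
    ∑ i ∈ s, (v i - u i) ≤ B - A := by
  have hvol : ∑ i ∈ s, MeasureTheory.volume (Ioo (u i) (v i)) ≤ MeasureTheory.volume (Icc A B) := by
    rw [← MeasureTheory.measure_biUnion_finset hdisj fun i _ => measurableSet_Ioo]
    exact MeasureTheory.measure_mono (iUnion₂_subset hsub)
  simp only [Real.volume_Ioo, Real.volume_Icc] at hvol
  rwa [← ENNReal.ofReal_sum_of_nonneg fun i hi => sub_nonneg.2 (huv i hi),
    ENNReal.ofReal_le_ofReal_iff (sub_nonneg.2 hAB)] at hvol

theorem hasDerivAt_iterate {𝕜 : Type*} [NontriviallyNormedField 𝕜] {g : 𝕜 → 𝕜}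
    (hg : Differentiable 𝕜 g) (n : ℕ) (x : 𝕜) :
    HasDerivAt g^[n] (∏ i ∈ Finset.range n, deriv g (g^[i] x)) x := by
  induction n with
  | zero => simpa using hasDerivAt_id x
  | succ n ih =>
    rw [iterate_succ', Finset.prod_range_succ, mul_comm]
    exact (hg _).hasDerivAt.comp x ih

theorem Function.Periodic.deriv {g : ℝ → ℝ} {c : ℝ} (hg : Periodic g c) : Periodic (deriv g) c :=
  fun x => by rw [← deriv_comp_add_const, show (fun y => g (y + c)) = g from funext hg]

theorem Function.Periodic.exists_lipschitzWith {g : ℝ → ℝ} {c : ℝ} (hp : Periodic g c)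
    (hc : c ≠ 0) (hg : ContDiff ℝ 1 g) : ∃ K, LipschitzWith K g := by
  obtain ⟨C, hC⟩ :=
    (hp.deriv.isBounded_of_continuous hc hg.continuous_deriv_one).exists_norm_le
  refine ⟨C.toNNReal, lipschitzWith_of_nnnorm_deriv_le (hg.differentiable one_ne_zero) fun x => ?_⟩
  rw [← NNReal.coe_le_coe, coe_nnnorm]
  exact (hC _ (mem_range_self x)).trans (Real.le_coe_toNNReal C)

theorem exists_int_forall_eq_add {G : ℝ → ℝ} (hG : Continuous G)
    (h : ∀ x, ∃ m : ℤ, G x = x + m) : ∃ m : ℤ, ∀ x, G x = x + m := by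
  choose k hk using h
  have hk_cont : Continuous k := by
    rw [Int.isClosedEmbedding_coe_real.continuous_iff]
    exact (hG.sub continuous_id).congr fun x => by simp [hk x]
  exact ⟨k 0, fun x => by rw [hk x, PreconnectedSpace.constant inferInstance hk_cont]⟩

namespace CircleDeg1Lift

variable {f : CircleDeg1Lift} {K S : Set ℝ} {a b : ℝ}

theorem pow_apply_ne_add_int_of_irrational (hτ : Irrational f.translationNumber) {n : ℕ}
    (hn : 0 < n) (x : ℝ) (m : ℤ) : (f ^ n) x ≠ x + m := fun h =>
  hτ ⟨m / n, by push_cast; exact (f.translationNumber_of_map_pow_eq_add_int h hn).symm⟩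

structure IsClosedInvariant (f : CircleDeg1Lift) (K : Set ℝ) : Prop where
  nonempty : K.Nonempty
  isClosed : IsClosed K
  add_one_mem_iff : ∀ x, x + 1 ∈ K ↔ x ∈ K
  apply_mem_iff : ∀ x, f x ∈ K ↔ x ∈ K

namespace IsClosedInvariant

theorem add_int_mem_iff (hK : IsClosedInvariant f K) (x : ℝ) (m : ℤ) : x + m ∈ K ↔ x ∈ K := by
  induction m using Int.induction_on with
  | zero => simp
  | succ n ih => rw [Int.cast_add, Int.cast_one, ← add_assoc, hK.add_one_mem_iff, ih]
  | pred n ih => rw [← ih, ← hK.add_one_mem_iff]; push_cast; ring_nf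

theorem pow_apply_mem_iff (hK : IsClosedInvariant f K) (n : ℕ) (x : ℝ) :
    (f ^ n) x ∈ K ↔ x ∈ K := by
  induction n generalizing x with
  | zero => simp
  | succ n ih => rw [pow_succ, mul_apply, ih, hK.apply_mem_iff]

theorem inter_Icc_nonempty (hK : IsClosedInvariant f K) : (K ∩ Icc 0 1).Nonempty := by
  obtain ⟨x, hx⟩ := hK.nonempty
  refine ⟨Int.fract x, ?_, Int.fract_nonneg x, (Int.fract_lt_one x).le⟩
  simpa [Int.fract, sub_eq_add_neg] using (hK.add_int_mem_iff x (-⌊x⌋)).2 hx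

theorem exists_minimal (hS : IsClosedInvariant f S) :
    ∃ K ⊆ S, Minimal (IsClosedInvariant f) K := by
  refine zorn_superset_nonempty {K | IsClosedInvariant f K} (fun c hc hchain hne => ?_) S hS
  refine ⟨⋂₀ c, ⟨?_, isClosed_sInter fun K hK => (hc hK).isClosed, fun x => ?_, fun x => ?_⟩,
    fun K => sInter_subset_of_mem⟩
  · have : Nonempty c := hne.to_subtype
    obtain ⟨x, hx⟩ := IsCompact.nonempty_iInter_of_directed_nonempty_isCompact_isClosed
      (fun K : c => (K : Set ℝ) ∩ Icc 0 1)
      (fun K L => (hchain.total K.2 L.2).elim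
        (fun h => ⟨K, subset_rfl, inter_subset_inter_left _ h⟩)
        (fun h => ⟨L, inter_subset_inter_left _ h, subset_rfl⟩))
      (fun K => (hc K.2).inter_Icc_nonempty) (fun K => isCompact_Icc.inter_left (hc K.2).isClosed)
      (fun K => (hc K.2).isClosed.inter isClosed_Icc)
    exact ⟨x, fun K hK => (mem_iInter.1 hx ⟨K, hK⟩).1⟩
  · simp only [mem_sInter]
    exact forall₂_congr fun K hK => (hc hK).add_one_mem_iff x
  · simp only [mem_sInter]
    exact forall₂_congr fun K hK => (hc hK).apply_mem_iff x

end IsClosedInvariant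

def omegaLimitModInt (f : CircleDeg1Lift) (a : ℝ) : Set ℝ :=
  {y | ∀ ε > 0, ∀ N : ℕ, ∃ n ≥ N, ∃ m : ℤ, |(f ^ n) a + m - y| < ε}

theorem isClosed_omegaLimitModInt (a : ℝ) : IsClosed (omegaLimitModInt f a) := by
  refine isClosed_of_closure_subset fun y hy ε hε N => ?_
  obtain ⟨z, hz, hyz⟩ := Metric.mem_closure_iff.1 hy (ε / 2) (half_pos hε)
  obtain ⟨n, hn, m, hm⟩ := hz (ε / 2) (half_pos hε) N
  rw [Real.dist_eq] at hyz
  exact ⟨n, hn, m, by linarith [abs_sub_le ((f ^ n) a + m) z y, abs_sub_comm y z]⟩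

theorem omegaLimitModInt_nonempty (a : ℝ) : (omegaLimitModInt f a).Nonempty := by
  obtain ⟨y, -, φ, hφ, hlim⟩ := isCompact_Icc.tendsto_subseq
    (x := fun n => Int.fract ((f ^ n) a)) fun n => ⟨Int.fract_nonneg _, (Int.fract_lt_one _).le⟩
  refine ⟨y, fun ε hε N => ?_⟩
  obtain ⟨k, hk⟩ := Metric.tendsto_atTop.1 hlim ε hε
  refine ⟨φ (max N k), (le_max_left N k).trans (hφ.id_le _), -⌊(f ^ φ (max N k)) a⌋, ?_⟩
  simpa [Int.fract, sub_eq_add_neg, Real.dist_eq] using hk _ (le_max_right N k)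

theorem add_one_mem_omegaLimitModInt_iff (a y : ℝ) :
    y + 1 ∈ omegaLimitModInt f a ↔ y ∈ omegaLimitModInt f a := by
  have key : ∀ n (m : ℤ), (f ^ n) a + ↑(m + 1) - (y + 1) = (f ^ n) a + m - y := by
    intros; push_cast; ring
  refine ⟨fun h ε hε N => ?_, fun h ε hε N => ?_⟩
  · obtain ⟨n, hn, m, hm⟩ := h ε hε N
    exact ⟨n, hn, m - 1, by rwa [← key, sub_add_cancel]⟩
  · obtain ⟨n, hn, m, hm⟩ := h ε hε N
    exact ⟨n, hn, m + 1, by rwa [key]⟩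

theorem pow_succ_apply_add_int (n : ℕ) (x : ℝ) (m : ℤ) :
    (f ^ (n + 1)) x + m = f ((f ^ n) x + m) := by
  rw [pow_succ', mul_apply, map_add_int]

theorem apply_mem_omegaLimitModInt_iff (hc : Continuous f) (hm : StrictMono f) (a y : ℝ) :
    f y ∈ omegaLimitModInt f a ↔ y ∈ omegaLimitModInt f a := by
  refine ⟨fun h ε hε N => ?_, fun h ε hε N => ?_⟩
  · -- a point mapped between `f (y - ε)` and `f (y + ε)` lies within `ε` of `y`
    have hlo : f (y - ε) < f y := hm (by linarith)
    have hhi : f y < f (y + ε) := hm (by linarith)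
    obtain ⟨n, hn, m, hnm⟩ := h (min (f y - f (y - ε)) (f (y + ε) - f y))
      (lt_min (by linarith) (by linarith)) (N + 1)
    obtain ⟨k, rfl⟩ : ∃ k, n = k + 1 := ⟨n - 1, by omega⟩
    rw [pow_succ_apply_add_int] at hnm
    obtain ⟨hnm₁, hnm₂⟩ := abs_lt.1 hnm
    have := min_le_left (f y - f (y - ε)) (f (y + ε) - f y)
    have := min_le_right (f y - f (y - ε)) (f (y + ε) - f y)
    refine ⟨k, by omega, m, abs_lt.2 ⟨?_, ?_⟩⟩
    · linarith [hm.lt_iff_lt.1 (show f (y - ε) < f ((f ^ k) a + m) by linarith)]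
    · linarith [hm.lt_iff_lt.1 (show f ((f ^ k) a + m) < f (y + ε) by linarith)]
  · obtain ⟨δ, hδ, hfδ⟩ := Metric.continuous_iff.1 hc y ε hε
    obtain ⟨n, hn, m, hnm⟩ := h δ hδ N
    refine ⟨n + 1, by omega, m, ?_⟩
    rw [pow_succ_apply_add_int, ← Real.dist_eq]
    exact hfδ _ (by rwa [Real.dist_eq])

theorem isClosedInvariant_omegaLimitModInt (hc : Continuous f) (hm : StrictMono f) (a : ℝ) :
    IsClosedInvariant f (omegaLimitModInt f a) :=
  ⟨omegaLimitModInt_nonempty a, isClosed_omegaLimitModInt a, add_one_mem_omegaLimitModInt_iff a,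
    apply_mem_omegaLimitModInt_iff hc hm a⟩

theorem IsClosedInvariant.omegaLimitModInt_subset (hK : IsClosedInvariant f K) (ha : a ∈ K) :
    omegaLimitModInt f a ⊆ K := by
  refine fun y hy => hK.isClosed.closure_subset (Metric.mem_closure_iff.2 fun ε hε => ?_)
  obtain ⟨n, -, m, hnm⟩ := hy ε hε 0
  exact ⟨_, (hK.add_int_mem_iff _ m).2 ((hK.pow_apply_mem_iff n a).2 ha),
    by rwa [Real.dist_eq, abs_sub_comm]⟩

theorem mem_omegaLimitModInt_of_minimal (hc : Continuous f) (hm : StrictMono f)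
    (hK : Minimal (IsClosedInvariant f) K) (ha : a ∈ K) : a ∈ omegaLimitModInt f a :=
  hK.eq_of_subset (isClosedInvariant_omegaLimitModInt hc hm a)
    (hK.prop.omegaLimitModInt_subset ha) ▸ ha

structure IsGap (K : Set ℝ) (a b : ℝ) : Prop where
  lt : a < b
  left_mem : a ∈ K
  right_mem : b ∈ K
  disjoint : Disjoint (Ioo a b) K

theorem IsClosedInvariant.exists_isGap (hK : IsClosedInvariant f K) (hne : K ≠ univ) :
    ∃ a b, IsGap K a b ∧ b ≤ a + 1 := by
  obtain ⟨z, hz⟩ := (ne_univ_iff_exists_notMem K).1 hne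
  obtain ⟨x, hx⟩ := hK.nonempty
  have hlo : (K ∩ Iic z).Nonempty := ⟨x + ↑(-⌈x - z⌉), (hK.add_int_mem_iff x _).2 hx, by
    simp only [mem_Iic]; push_cast; linarith [Int.le_ceil (x - z)]⟩
  have hhi : (K ∩ Ici z).Nonempty := ⟨x + ↑⌈z - x⌉, (hK.add_int_mem_iff x _).2 hx, by
    simp only [mem_Ici]; linarith [Int.le_ceil (z - x)]⟩
  have hlo_bdd : BddAbove (K ∩ Iic z) := ⟨z, fun _ h => h.2⟩
  have hhi_bdd : BddBelow (K ∩ Ici z) := ⟨z, fun _ h => h.2⟩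
  obtain ⟨haK, haz⟩ := (hK.isClosed.inter isClosed_Iic).csSup_mem hlo hlo_bdd
  obtain ⟨hbK, hzb⟩ := (hK.isClosed.inter isClosed_Ici).csInf_mem hhi hhi_bdd
  set a := sSup (K ∩ Iic z)
  set b := sInf (K ∩ Ici z)
  have hdisj : Disjoint (Ioo a b) K := by
    refine disjoint_left.2 fun y ⟨hay, hyb⟩ hyK => ?_
    rcases le_total y z with hyz | hyz
    · exact hay.not_ge (le_csSup hlo_bdd ⟨hyK, hyz⟩)
    · exact hyb.not_ge (csInf_le hhi_bdd ⟨hyK, hyz⟩)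
  have hab : a < b := (lt_of_le_of_ne haz (ne_of_mem_of_not_mem haK hz)).trans
    (lt_of_le_of_ne hzb (ne_of_mem_of_not_mem hbK hz).symm)
  refine ⟨a, b, ⟨hab, haK, hbK, hdisj⟩, not_lt.1 fun hba => ?_⟩
  exact disjoint_left.1 hdisj ⟨by linarith, hba⟩ ((hK.add_one_mem_iff a).2 haK)

namespace IsGap

theorem left_eq_of_not_disjoint {c d : ℝ} (h₁ : IsGap K a b) (h₂ : IsGap K c d)
    (h : ¬Disjoint (Ioo a b) (Ioo c d)) : a = c := by
  obtain ⟨x, ⟨hax, hxb⟩, hcx, hxd⟩ := not_disjoint_iff.1 h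
  by_contra hne
  rcases lt_or_gt_of_ne hne with hlt | hlt
  · exact disjoint_left.1 h₁.disjoint ⟨hlt, hcx.trans hxb⟩ h₂.left_mem
  · exact disjoint_left.1 h₂.disjoint ⟨hlt, hax.trans hxd⟩ h₁.left_mem

theorem add_int (hK : IsClosedInvariant f K) (h : IsGap K a b) (m : ℤ) :
    IsGap K (a + m) (b + m) := by
  refine ⟨by linarith [h.lt], (hK.add_int_mem_iff a m).2 h.left_mem,
    (hK.add_int_mem_iff b m).2 h.right_mem, disjoint_left.2 fun y ⟨hay, hyb⟩ hyK => ?_⟩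
  have hy : y + ↑(-m) ∈ Ioo a b := by constructor <;> push_cast <;> linarith
  exact disjoint_left.1 h.disjoint hy ((hK.add_int_mem_iff y _).2 hyK)

theorem map (hK : IsClosedInvariant f K) (hm : StrictMono f) (hs : Surjective f)
    (h : IsGap K a b) : IsGap K (f a) (f b) := by
  refine ⟨hm h.lt, (hK.apply_mem_iff a).2 h.left_mem, (hK.apply_mem_iff b).2 h.right_mem,
    disjoint_left.2 fun y ⟨hay, hyb⟩ hyK => ?_⟩
  obtain ⟨x, rfl⟩ := hs y
  exact disjoint_left.1 h.disjoint ⟨hm.lt_iff_lt.1 hay, hm.lt_iff_lt.1 hyb⟩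
    ((hK.apply_mem_iff x).1 hyK)

theorem pow_map (hK : IsClosedInvariant f K) (hm : StrictMono f) (hs : Surjective f)
    (h : IsGap K a b) (n : ℕ) : IsGap K ((f ^ n) a) ((f ^ n) b) := by
  induction n with
  | zero => simpa using h
  | succ n ih => simpa only [pow_succ', mul_apply] using ih.map hK hm hs

theorem disjoint_pow_map (hK : IsClosedInvariant f K) (hm : StrictMono f) (hs : Surjective f)
    (hτ : Irrational f.translationNumber) (h : IsGap K a b) {i j : ℕ} (hij : i < j) (m m' : ℤ) :
    Disjoint (Ioo ((f ^ i) a + m) ((f ^ i) b + m)) (Ioo ((f ^ j) a + m') ((f ^ j) b + m')) := by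
  by_contra hnd
  refine pow_apply_ne_add_int_of_irrational hτ (Nat.sub_pos_of_lt hij) ((f ^ i) a) (m - m') ?_
  have heq := ((h.pow_map hK hm hs i).add_int hK m).left_eq_of_not_disjoint
    ((h.pow_map hK hm hs j).add_int hK m') hnd
  rw [← mul_apply, ← pow_add, Nat.sub_add_cancel hij.le]
  push_cast
  linarith

theorem summable_length (hK : IsClosedInvariant f K) (hm : StrictMono f) (hs : Surjective f)
    (hτ : Irrational f.translationNumber) (h : IsGap K a b) (hb : b ≤ a + 1) :
    Summable fun i => (f ^ i) b - (f ^ i) a := by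
  have hlt i : (f ^ i) a < (f ^ i) b := (h.pow_map hK hm hs i).lt
  have hle i : (f ^ i) b ≤ (f ^ i) a + 1 := ((f ^ i).monotone hb).trans_eq ((f ^ i).map_add_one a)
  -- translate the `i`-th iterate so that it starts in `[a, a + 1)`
  set k : ℕ → ℤ := fun i => -⌊(f ^ i) a - a⌋
  refine summable_of_sum_range_le (c := 2) (fun i => (sub_pos.2 (hlt i)).le) fun n => ?_
  have hsum := sum_sub_le_of_pairwiseDisjoint_Ioo (Finset.range n)
    (u := fun i => (f ^ i) a + k i) (v := fun i => (f ^ i) b + k i) (A := a) (B := a + 2)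
    (by linarith) (fun i _ => by linarith [hlt i]) (fun i _ => ?_) ?_
  · simpa using hsum
  · have h₁ := Int.floor_le ((f ^ i) a - a)
    have h₂ := Int.lt_floor_add_one ((f ^ i) a - a)
    refine Ioo_subset_Icc_self.trans (Icc_subset_Icc ?_ ?_) <;> push_cast [k] <;>
      linarith [hle i]
  · exact ((pairwise_disjoint_on _).2 fun i j hij =>
      h.disjoint_pow_map hK hm hs hτ hij _ _).set_pairwise _

end IsGap

theorem periodic_deriv (f : CircleDeg1Lift) : Periodic (deriv f) 1 := fun x => by
  rw [← deriv_comp_add_const]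
  simp_rw [map_add_one]
  exact deriv_add_const _

theorem exists_lipschitzWith_log_deriv (hf : ContDiff ℝ 2 f) (hpos : ∀ x, 0 < deriv f x) :
    ∃ V, LipschitzWith V fun x => log (deriv f x) :=
  (f.periodic_deriv.comp log).exists_lipschitzWith one_ne_zero
    ((hf.deriv' (n := 1)).log fun x => (hpos x).ne')

theorem hasDerivAt_pow (hf : Differentiable ℝ f) (n : ℕ) (x : ℝ) :
    HasDerivAt (f ^ n) (∏ i ∈ Finset.range n, deriv f ((f ^ i) x)) x := by
  simpa only [coe_pow] using hasDerivAt_iterate hf n x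

theorem deriv_pow_pos (hf : Differentiable ℝ f) (hpos : ∀ x, 0 < deriv f x) (n : ℕ) (x : ℝ) :
    0 < deriv (f ^ n) x := by
  rw [(hasDerivAt_pow hf n x).deriv]
  exact Finset.prod_pos fun i _ => hpos _

section Distortion

variable {V : NNReal} (hf : Differentiable ℝ f) (hpos : ∀ x, 0 < deriv f x)
  (hV : LipschitzWith V fun x => log (deriv f x))
include hf hpos hV

theorem log_deriv_pow_sub_le (n : ℕ) {t b x y : ℝ} (hx : x ∈ Icc t b) (hy : y ∈ Icc t b) :
    log (deriv (f ^ n) x) - log (deriv (f ^ n) y) ≤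
      V * ∑ i ∈ Finset.range n, ((f ^ i) b - (f ^ i) t) := by
  rw [(hasDerivAt_pow hf n x).deriv, (hasDerivAt_pow hf n y).deriv,
    log_prod fun i _ => (hpos _).ne', log_prod fun i _ => (hpos _).ne', ← Finset.sum_sub_distrib,
    Finset.mul_sum]
  refine Finset.sum_le_sum fun i _ => ?_
  have hmaps {z} (hz : z ∈ Icc t b) : (f ^ i) z ∈ Icc ((f ^ i) t) ((f ^ i) b) :=
    ⟨(f ^ i).monotone hz.1, (f ^ i).monotone hz.2⟩
  calc _ ≤ dist (log (deriv f ((f ^ i) x))) (log (deriv f ((f ^ i) y))) :=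
        (le_abs_self _).trans_eq (Real.dist_eq _ _).symm
    _ ≤ V * dist ((f ^ i) x) ((f ^ i) y) := hV.dist_le_mul _ _
    _ ≤ V * ((f ^ i) b - (f ^ i) t) :=
        mul_le_mul_of_nonneg_left (Real.dist_le_of_mem_Icc (hmaps hx) (hmaps hy)) V.2

/-- Schwartz's distortion estimate. -/
theorem pow_sub_le_two_mul_of_sum_le {ε : ℝ} (hab : a < b)
    (hsum : ∀ n, ∑ i ∈ Finset.range n, ((f ^ i) b - (f ^ i) a) ≤ ε)
    (hε : exp (2 * V * ε) ≤ 4 / 3) (n : ℕ) :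
    (f ^ n) b - (f ^ n) (a - (b - a) / 2) ≤ 2 * ((f ^ n) b - (f ^ n) a) := by
  induction n using Nat.strong_induction_on with
  | _ n ih =>
  set t := a - (b - a) / 2 with ht
  have hsum' : ∑ i ∈ Finset.range n, ((f ^ i) b - (f ^ i) t) ≤ 2 * ε := by
    calc _ ≤ ∑ i ∈ Finset.range n, 2 * ((f ^ i) b - (f ^ i) a) :=
          Finset.sum_le_sum fun i hi => ih i (Finset.mem_range.1 hi)
      _ ≤ 2 * ε := by rw [← Finset.mul_sum]; linarith [hsum n]
  have hdiff : Differentiable ℝ (f ^ n) := fun x => (hasDerivAt_pow hf n x).differentiableAt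
  obtain ⟨ξ, hξ, hξeq⟩ := exists_deriv_eq_slope (⇑(f ^ n)) (show t < b by linarith)
    hdiff.continuous.continuousOn hdiff.differentiableOn
  obtain ⟨η, hη, hηeq⟩ := exists_deriv_eq_slope (⇑(f ^ n)) hab
    hdiff.continuous.continuousOn hdiff.differentiableOn
  have hξη : deriv (f ^ n) ξ ≤ deriv (f ^ n) η * exp (2 * V * ε) := by
    have := log_deriv_pow_sub_le hf hpos hV n (t := t) (b := b) ⟨hξ.1.le, hξ.2.le⟩
      ⟨by linarith [hη.1], hη.2.le⟩
    rw [← log_le_log_iff (deriv_pow_pos hf hpos n ξ)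
      (mul_pos (deriv_pow_pos hf hpos n η) (exp_pos _)), log_mul (deriv_pow_pos hf hpos n η).ne'
      (exp_pos _).ne', log_exp]
    nlinarith [V.2]
  rw [hξeq, hηeq, div_mul_eq_mul_div, div_le_div_iff₀ (by linarith) (by linarith)] at hξη
  have hlen : 0 ≤ (f ^ n) b - (f ^ n) a := sub_nonneg.2 ((f ^ n).monotone hab.le)
  refine le_of_mul_le_mul_right (hξη.trans ?_) (sub_pos.2 hab)
  calc _ ≤ ((f ^ n) b - (f ^ n) a) * (4 / 3) * (3 / 2 * (b - a)) := by
        rw [show b - t = 3 / 2 * (b - a) by rw [ht]; ring]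
        gcongr
    _ = _ := by ring

end Distortion

theorem exists_pow_apply_eq_add_int_of_mem_omegaLimitModInt (hc : Continuous f) (hab : a < b)
    (hstretch : ∀ n, (f ^ n) b - (f ^ n) (a - (b - a) / 2) ≤ 2 * ((f ^ n) b - (f ^ n) a))
    (hlen : Tendsto (fun n => (f ^ n) b - (f ^ n) a) atTop (𝓝 0))
    (ha : a ∈ omegaLimitModInt f a) : ∃ n > 0, ∃ x, ∃ m : ℤ, (f ^ n) x = x + m := by
  set t := a - (b - a) / 2 with ht
  obtain ⟨n₀, hn₀⟩ := eventually_atTop.1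
    (hlen.eventually (gt_mem_nhds (show (0 : ℝ) < (b - a) / 8 by linarith)))
  obtain ⟨n, hn, m, hnm⟩ := ha ((b - a) / 4) (by linarith) (max n₀ 1)
  obtain ⟨hnm₁, hnm₂⟩ := abs_lt.1 hnm
  have hsmall := hn₀ n (le_of_max_le_left hn)
  have hmaps : MapsTo (fun x => (f ^ n) x + m) (Icc t b) (Icc t b) := fun x hx => by
    have := (f ^ n).monotone hx.1
    have := (f ^ n).monotone hx.2
    have := hstretch n
    constructor <;> linarith
  have hcont : Continuous (f ^ n) := by rw [coe_pow]; exact hc.iterate n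
  obtain ⟨x, -, hx⟩ := exists_mem_Icc_isFixedPt_of_mapsTo (f := fun x => (f ^ n) x + m)
    (hcont.add continuous_const).continuousOn (by linarith) hmaps
  exact ⟨n, by omega, x, -m, by push_cast; linarith [hx.eq]⟩

/-- Denjoy's theorem. -/
theorem IsClosedInvariant.eq_univ (hf : ContDiff ℝ 2 f) (hpos : ∀ x, 0 < deriv f x)
    (hτ : Irrational f.translationNumber) (hS : IsClosedInvariant f S) : S = univ := by
  have hm : StrictMono f := strictMono_of_deriv_pos hpos
  have hc : Continuous f := hf.continuous
  have hs : Surjective f := f.continuous_iff_surjective.1 hc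
  by_contra hne
  obtain ⟨K, hKS, hK⟩ := hS.exists_minimal
  obtain ⟨a, b, hab, hb⟩ := hK.prop.exists_isGap fun h => hne (eq_univ_of_univ_subset (h ▸ hKS))
  obtain ⟨V, hV⟩ := exists_lipschitzWith_log_deriv hf hpos
  obtain ⟨ε, hεV, hε⟩ : ∃ ε, exp (2 * V * ε) ≤ 4 / 3 ∧ 0 < ε := by
    have : ∀ᶠ ε in 𝓝 (0 : ℝ), exp (2 * V * ε) ≤ 4 / 3 :=
      (Continuous.tendsto (by fun_prop) 0).eventually (ge_mem_nhds (by norm_num))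
    exact ((this.filter_mono nhdsWithin_le_nhds).and self_mem_nhdsWithin).exists (f := 𝓝[>] 0)
  set ℓ : ℕ → ℝ := fun i => (f ^ i) b - (f ^ i) a
  have hℓ : Summable ℓ := hab.summable_length hK.prop hm hs hτ hb
  obtain ⟨N, hN⟩ : ∃ N, ∑' i, ℓ (i + N) < ε :=
    ((tendsto_sum_nat_add ℓ).eventually (gt_mem_nhds hε)).exists
  have hgap := hab.pow_map hK.prop hm hs N
  have hshift i : (f ^ i) ((f ^ N) b) - (f ^ i) ((f ^ N) a) = ℓ (i + N) := by
    simp only [ℓ, pow_add, mul_apply]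
  have hℓN : Summable fun i => ℓ (i + N) := (summable_nat_add_iff N).2 hℓ
  have hsum n : ∑ i ∈ Finset.range n, ((f ^ i) ((f ^ N) b) - (f ^ i) ((f ^ N) a)) ≤ ε := by
    simp_rw [hshift]
    exact (hℓN.sum_le_tsum _ fun i _ => (sub_pos.2 (hab.pow_map hK.prop hm hs _).lt).le).trans
      hN.le
  obtain ⟨n, hn, x, m, hx⟩ := exists_pow_apply_eq_add_int_of_mem_omegaLimitModInt hc hgap.lt
    (pow_sub_le_two_mul_of_sum_le (hf.differentiable two_ne_zero) hpos hV hgap.lt hsum hεV)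
    (by simp_rw [hshift]; exact hℓN.tendsto_atTop_zero)
    (mem_omegaLimitModInt_of_minimal hc hm hK hgap.left_mem)
  exact pow_apply_ne_add_int_of_irrational hτ hn x m hx

theorem isClosedInvariant_setOf_eq_add_int {G : ℝ → ℝ} (hGc : Continuous G)
    (hGper : ∀ x, G (x + 1) = G x + 1) (hcomm : ∃ m : ℤ, ∀ x, f (G x) = G (f x) + m)
    (hfix : ∃ x, ∃ m : ℤ, G x = x + m) (hinj : Injective f) :
    IsClosedInvariant f {x | ∃ m : ℤ, G x = x + m} where
  nonempty := hfix
  isClosed := by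
    have : {x | ∃ m : ℤ, G x = x + m} = (fun x => G x - x) ⁻¹' range ((↑) : ℤ → ℝ) := by
      ext x
      exact exists_congr fun m => by constructor <;> intro h <;> linarith
    rw [this]
    exact Int.isClosedEmbedding_coe_real.isClosed_range.preimage (hGc.sub continuous_id)
  add_one_mem_iff x := exists_congr fun m => by
    rw [hGper]
    constructor <;> intro h <;> linarith
  apply_mem_iff x := by
    obtain ⟨m₀, hm₀⟩ := hcomm
    constructor
    · rintro ⟨k, hk⟩
      refine ⟨k + m₀, hinj ?_⟩
      rw [hm₀, hk, Int.cast_add, ← add_assoc, map_add_int, map_add_int]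
    · rintro ⟨k, hk⟩
      refine ⟨k - m₀, ?_⟩
      rw [eq_sub_of_add_eq (hm₀ x).symm, hk, map_add_int]; push_cast; ring

end CircleDeg1Lift

open CircleDeg1Lift

/-- Let `f` be an orientation-preserving `C^∞` circle diffeomorphism with irrational
rotation number and let `g` be an orientation-preserving circle homeomorphism commuting
with `f`. If `g` has a fixed point, then `g = id`. (All circle maps are given by lifts:
commutation, fixed points and equality with the identity hold up to integer translations.) -/
theorem commuting_with_irrational_fixed_point_eq_id (F G : ℝ → ℝ)
    (hF : SmoothCircleLift F) (hG : CircleHomeoLift G)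
    (ρ : ℝ) (hρ : HasRotationNumber F ρ) (hirr : Irrational ρ)
    (hcomm : ∃ m : ℤ, ∀ x : ℝ, F (G x) = G (F x) + m)
    (hfix : ∃ x : ℝ, ∃ m : ℤ, G x = x + m) :
    ∃ m : ℤ, ∀ x : ℝ, G x = x + m := by
  obtain ⟨hFsmooth, hFper, hFpos⟩ := hF
  obtain ⟨hGc, -, -, hGper⟩ := hG
  let f : CircleDeg1Lift := ⟨⟨F, (strictMono_of_deriv_pos hFpos).monotone⟩, hFper⟩
  have hτ : f.translationNumber = ρ :=
    tendsto_nhds_unique (f.tendsto_translation_number₀.congr fun n => by rw [coe_pow]; rfl) hρ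
  have hS := isClosedInvariant_setOf_eq_add_int (f := f) hGc hGper hcomm hfix
    (strictMono_of_deriv_pos hFpos).injective
  have huniv := hS.eq_univ (hFsmooth.of_le (WithTop.coe_le_coe.2 le_top)) hFpos (hτ ▸ hirr)
  exact exists_int_forall_eq_add hGc fun x => huniv.ge (mem_univ x)
end
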